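/- arXiv:1704.02237 — 10 statements merged into one kernel-verified Lean document; each statement's English description precedes it below -/
import Mathlib

section
/- Let k ≥ 1 and let F be a finite simple graph with at most k vertices. If a finite simple graph G has the k-extension property, then G contains F as an induced subgraph. -/
/-!
Embed the vertices of `F` one at a time. Once fewer than `k` vertices are embedded, the
extension property, applied to the images of the neighbours and of the non-neighbours of
the next vertex, supplies a fresh vertex of `G` with exactly the required adjacencies.
-/

/-- A graph `G` has the `k`-extension property if for every two disjoint finite sets
`X`, `Y` of vertices with `|X ∪ Y| < k` there is a vertex `z ∉ X ∪ Y` adjacent to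
every vertex of `X` and to no vertex of `Y`. -/
def HasExtensionProperty {V : Type} (G : SimpleGraph V) (k : ℕ) : Prop :=
  ∀ X Y : Finset V, Disjoint X Y → X.card + Y.card < k →
    ∃ z : V, z ∉ X ∧ z ∉ Y ∧ (∀ x ∈ X, G.Adj z x) ∧ (∀ y ∈ Y, ¬ G.Adj z y)

namespace HasExtensionProperty

variable {V : Type} {G : SimpleGraph V} {k : ℕ}

theorem exists_adj_iff {α : Type*} [Fintype α] (hG : HasExtensionProperty G k) {f : α ↪ V}
    (hα : Fintype.card α < k) (P : α → Prop) :
    ∃ z, (∀ a, z ≠ f a) ∧ ∀ a, G.Adj z (f a) ↔ P a := by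
  classical
  obtain ⟨z, hzX, hzY, hX, hY⟩ :=
    hG ((Finset.univ.filter P).map f) ((Finset.univ.filter (¬ P ·)).map f)
      ((Finset.disjoint_map f).2 (Finset.disjoint_filter_filter_not _ _ _))
      (by simpa only [Finset.card_map, Finset.card_filter_add_card_filter_not])
  refine ⟨z, fun a hza => ?_, fun a => ⟨fun hadj => ?_, fun ha => ?_⟩⟩
  · by_cases ha : P a
    · exact hzX (by simpa [hza])
    · exact hzY (by simpa [hza])
  · by_contra ha
    exact hY (f a) (by simpa) hadj
  · exact hX (f a) (by simpa)

theorem nonempty_embedding_option {α : Type*} [Fintype α] (hG : HasExtensionProperty G k)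
    {F : SimpleGraph (Option α)} (φ : F.comap some ↪g G) (hα : Fintype.card α < k) :
    Nonempty (F ↪g G) := by
  obtain ⟨z, hz, hadj⟩ := hG.exists_adj_iff (f := φ.toEmbedding) hα (F.Adj none ∘ some)
  refine ⟨⟨⟨fun o => o.elim z φ, ?_⟩, ?_⟩⟩
  · rintro (_ | a) (_ | b) h
    · rfl
    · exact absurd h (hz b)
    · exact absurd h.symm (hz a)
    · exact congrArg some (φ.injective h)
  · rintro (_ | a) (_ | b)
    · simp
    · exact hadj b
    · exact G.adj_comm _ _ |>.trans <| (hadj a).trans (F.adj_comm _ _)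
    · exact φ.map_rel_iff

end HasExtensionProperty

theorem extension_property_forces_induced_subgraph_general
    {VF VG : Type} [Fintype VF]
    (k : ℕ)
    (F : SimpleGraph VF) (G : SimpleGraph VG)
    (hF : Fintype.card VF ≤ k)
    (hG : HasExtensionProperty G k) :
    Nonempty (F ↪g G) := by
  refine Fintype.induction_empty_option
    (P := fun α _ => ∀ F : SimpleGraph α, Fintype.card α ≤ k → Nonempty (F ↪g G))
    ?of_equiv ?empty ?option VF F hF
  case of_equiv =>
    intro α β _ e ih F hF
    let _ : Fintype α := Fintype.ofEquiv β e.symm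
    obtain ⟨ψ⟩ := ih (F.comap e) ((Fintype.card_congr e).trans_le hF)
    exact ⟨ψ.comp (SimpleGraph.Iso.comap e F).symm.toEmbedding⟩
  case empty => exact fun F _ => ⟨⟨Function.Embedding.ofIsEmpty, fun {a} => isEmptyElim a⟩⟩
  case option =>
    intro α _ ih F hF
    rw [Fintype.card_option] at hF
    obtain ⟨φ⟩ := ih (F.comap some) (by omega)
    exact hG.nonempty_embedding_option φ (by omega)

theorem extension_property_forces_induced_subgraph
    {VF VG : Type} [Fintype VF] [Fintype VG]
    (k : ℕ) (hk : 1 ≤ k)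
    (F : SimpleGraph VF) (G : SimpleGraph VG)
    (hF : Fintype.card VF ≤ k)
    (hG : HasExtensionProperty G k) :
    Nonempty (F ↪g G) :=
  extension_property_forces_induced_subgraph_general k F G hF hG
end

section
/- For all positive integers k and ℓ, there exists a finite simple graph G that has the k-extension property and contains every finite simple graph on ℓ vertices as an induced subgraph. -/
/-!
Some graph on `n` vertices has the `k`-extension property by a first-moment count over all
graphs on `n` labelled vertices. For a fixed pair `(X, Y)` with `|X ∪ Y| = s < k`, each of the
`n - s` other vertices is a witness, independently, for a proportion `2^{-s}` of the graphs, so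
the pair has no witness in a proportion `(1 - 2^{-s})^{n - s}` of them. This is exponentially
small in `n` while there are only polynomially many pairs. A graph with the `max k ℓ`-extension
property contains every graph on `ℓ` vertices as an induced subgraph: embed the vertices one at a
time, placing each new one with the prescribed adjacencies to those already placed.
-/

open Finset SimpleGraph

section Extension

variable {V : Type} {G : SimpleGraph V} {k : ℕ}

theorem HasExtensionProperty.mono {k' : ℕ} (h : HasExtensionProperty G k) (hk : k' ≤ k) :
    HasExtensionProperty G k' :=
  fun X Y hXY hcard => h X Y hXY (hcard.trans_le hk)

theorem HasExtensionProperty.exists_adj_iff_mem {ι : Type*} [Fintype ι]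
    (h : HasExtensionProperty G k) (hι : Fintype.card ι < k) (φ : ι ↪ V) (A : Finset ι) :
    ∃ z, z ∉ Set.range φ ∧ ∀ i, G.Adj z (φ i) ↔ i ∈ A := by
  classical
  obtain ⟨z, hzX, hzY, hX, hY⟩ := h (A.map φ) (Aᶜ.map φ)
    (by simpa using disjoint_compl_right) (by simpa [card_add_card_compl] using hι)
  refine ⟨z, ?_, fun i => ?_⟩
  · rintro ⟨i, rfl⟩
    by_cases hi : i ∈ A
    exacts [hzX (mem_map_of_mem φ hi), hzY (mem_map_of_mem φ (mem_compl.2 hi))]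
  · by_cases hi : i ∈ A
    · exact iff_of_true (hX _ (mem_map_of_mem φ hi)) hi
    · exact iff_of_false (hY _ (mem_map_of_mem φ (mem_compl.2 hi))) hi

theorem HasExtensionProperty.isIndContained_of_fin (h : HasExtensionProperty G k) :
    ∀ {m : ℕ}, m ≤ k → ∀ F : SimpleGraph (Fin m), F ⊴ G
  | 0, _, _ => .of_isEmpty
  | m + 1, hm, F => by
    classical
    obtain ⟨φ⟩ := h.isIndContained_of_fin (m.le_succ.trans hm) (F.comap Fin.succ)
    obtain ⟨z, hz, hzφ⟩ := h.exists_adj_iff_mem (by simpa using hm) φ.toEmbedding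
      {i | F.Adj 0 i.succ}
    simp only [RelEmbedding.coe_toEmbedding, mem_filter_univ] at hz hzφ
    refine ⟨⟨⟨Fin.cons z φ, Fin.cons_injective_iff.2 ⟨hz, φ.injective⟩⟩, fun {i j} => ?_⟩⟩
    cases i using Fin.cases <;> cases j using Fin.cases <;>
      simp [G.adj_comm _ z, F.adj_comm _ 0, hzφ]

theorem HasExtensionProperty.isIndContained {W : Type*} [Fintype W]
    (h : HasExtensionProperty G k) (hW : Fintype.card W ≤ k) (F : SimpleGraph W) : F ⊴ G :=
  (Iso.comap (Fintype.equivFin W).symm F).isIndContained'.trans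
    (h.isIndContained_of_fin hW _)

end Extension

section Counting

variable {α T W : Type*} [Fintype α] [DecidableEq α] [Fintype T] [Fintype W] [DecidableEq W]

-- The rows `e (t, ·)` are pairwise disjoint, so `f` avoids `p` on each of them independently.
theorem card_forall_row_ne (e : T × W ↪ α) (p : W → Bool) :
    (Fintype.card {f : α → Bool // ∀ t, (fun w => f (e (t, w))) ≠ p} : ℝ) =
      (1 - 2⁻¹ ^ Fintype.card W) ^ Fintype.card T * 2 ^ Fintype.card α := by
  classical
  let E : (α → Bool) ≃ (T → W → Bool) × ({a // a ∉ Set.range e} → Bool) :=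
    (Equiv.piEquivPiSubtypeProd (· ∈ Set.range e) fun _ => Bool).trans <|
      ((Equiv.ofInjective e e.injective).symm.arrowCongr (Equiv.refl Bool)).trans
        (Equiv.curry T W Bool) |>.prodCongr (Equiv.refl _)
  let E' : {f : α → Bool // ∀ t, (fun w => f (e (t, w))) ≠ p} ≃
      (T → {q : W → Bool // q ≠ p}) × ({a // a ∉ Set.range e} → Bool) :=
    (E.subtypeEquiv (q := fun x => ∀ t, x.1 t ≠ p) fun _ => Iff.rfl).trans <|
      (Equiv.prodSubtypeFstEquivSubtypeProd (p := fun g : T → W → Bool => ∀ t, g t ≠ p)).trans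
        ((Equiv.subtypePiEquivPi (p := fun _ q => q ≠ p)).prodCongr (Equiv.refl _))
  have hR : Fintype.card {a // a ∉ Set.range e} =
      Fintype.card α - Fintype.card T * Fintype.card W := by
    rw [Fintype.card_subtype_compl, Fintype.card_congr (Equiv.ofInjective e e.injective).symm,
      Fintype.card_prod]
  have hTW : Fintype.card T * Fintype.card W ≤ Fintype.card α := by
    simpa using Fintype.card_le_of_embedding e
  set a := Fintype.card α
  set t := Fintype.card T
  set w := Fintype.card W
  have hcard : Fintype.card {f : α → Bool // ∀ t, (fun w => f (e (t, w))) ≠ p} =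
      (2 ^ w - 1) ^ t * 2 ^ (a - t * w) := by
    rw [Fintype.card_congr E', Fintype.card_prod, Fintype.card_pi, Fintype.card_fun, hR]
    simp [t, w]
  have hpow : (2 : ℝ) ^ a = (2 ^ w) ^ t * 2 ^ (a - t * w) := by
    rw [← pow_mul, ← pow_add, mul_comm, Nat.add_sub_cancel' hTW]
  have hx : (1 - (2⁻¹ : ℝ) ^ w) * 2 ^ w = 2 ^ w - 1 := by
    rw [sub_mul, inv_pow, inv_mul_cancel₀ (by positivity), one_mul]
  push_cast [hcard, Nat.one_le_two_pow]
  rw [hpow, ← mul_assoc, ← mul_pow, hx]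

end Counting

theorem pow_sub_mul_pow_le {x ρ : ℝ} (hx : 0 ≤ x) (hxρ : x ≤ ρ) (hρ : ρ ≤ 1) {N s k : ℕ}
    (hsN : s ≤ N) (hsk : s < k) : x ^ (N - s) * ρ ^ k ≤ ρ ^ (N + 1) :=
  calc x ^ (N - s) * ρ ^ k ≤ ρ ^ (N - s) * ρ ^ (s + 1) :=
        mul_le_mul (pow_le_pow_left₀ hx hxρ _) (pow_le_pow_of_le_one (hx.trans hxρ) hρ hsk)
          (pow_nonneg (hx.trans hxρ) _) (pow_nonneg (hx.trans hxρ) _)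
    _ = ρ ^ (N + 1) := by rw [← pow_add]; congr 1; omega

theorem exists_sq_mul_pow_lt {ρ : ℝ} (hρ : |ρ| < 1) (k : ℕ) {c : ℝ} (hc : 0 < c) :
    ∃ n : ℕ, ((k : ℝ) * (n + 1) ^ k) ^ 2 * ρ ^ (n + 1) < c := by
  have h := ((tendsto_pow_const_mul_const_pow_of_abs_lt_one (2 * k) hρ).comp
    (Filter.tendsto_add_atTop_nat 1)).const_mul ((k : ℝ) ^ 2)
  rw [mul_zero] at h
  obtain ⟨n, hn⟩ := (h.eventually (gt_mem_nhds hc)).exists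
  refine ⟨n, lt_of_eq_of_lt ?_ hn⟩
  simp only [Function.comp_apply]
  push_cast
  ring

section RandomGraph

variable {V : Type} [Fintype V] [DecidableEq V]

/-- A uniformly random `f` gives the random graph `G(n, 1/2)`; the values of `f` on the diagonal
are ignored. -/
def edgeGraph (f : Sym2 V → Bool) : SimpleGraph V := fromEdgeSet {e | f e}

def IsExtensionWitness (G : SimpleGraph V) (X Y : Finset V) (z : V) : Prop :=
  z ∉ X ∧ z ∉ Y ∧ (∀ x ∈ X, G.Adj z x) ∧ ∀ y ∈ Y, ¬G.Adj z y

open scoped Classical in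
theorem card_not_exists_isExtensionWitness_le {X Y : Finset V} (hXY : Disjoint X Y) :
    (#{f : Sym2 V → Bool | ¬∃ z, IsExtensionWitness (edgeGraph f) X Y z} : ℝ) ≤
      (1 - 2⁻¹ ^ #(X ∪ Y)) ^ (Fintype.card V - #(X ∪ Y)) * 2 ^ Fintype.card (Sym2 V) := by
  set U := X ∪ Y
  let e : {z // z ∉ U} × U ↪ Sym2 V :=
    ⟨fun zw => s(zw.1, zw.2), fun ⟨z, w⟩ ⟨z', w'⟩ h => by
      rcases Sym2.eq_iff.1 h with ⟨hz, hw⟩ | ⟨hzw, -⟩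
      · exact Prod.ext (Subtype.ext hz) (Subtype.ext hw)
      · exact absurd (hzw ▸ w'.2) z.2⟩
  let p : U → Bool := fun w => decide (w.1 ∈ X)
  have hwitness : ∀ f : Sym2 V → Bool, (¬∃ z, IsExtensionWitness (edgeGraph f) X Y z) →
      ∀ t, (fun w => f (e (t, w))) ≠ p := by
    intro f hf t ht
    refine hf ⟨t, fun h => t.2 (mem_union_left _ h), fun h => t.2 (mem_union_right _ h),
      fun x hx => ?_, fun y hy hadj => ?_⟩
    · have hfx : f s(t, x) = true :=
        (congrFun ht ⟨x, mem_union_left _ hx⟩).trans (decide_eq_true hx)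
      exact (fromEdgeSet_adj _).2 ⟨hfx, fun h => t.2 (h ▸ mem_union_left _ hx)⟩
    · have hfy : f s(t, y) = false :=
        (congrFun ht ⟨y, mem_union_right _ hy⟩).trans (decide_eq_false (disjoint_right.1 hXY hy))
      simp [edgeGraph, hfy] at hadj
  calc (#{f : Sym2 V → Bool | ¬∃ z, IsExtensionWitness (edgeGraph f) X Y z} : ℝ)
      ≤ Fintype.card {f : Sym2 V → Bool // ∀ t, (fun w => f (e (t, w))) ≠ p} := by
        rw [Fintype.card_subtype]
        exact_mod_cast card_le_card (monotone_filter_right _ fun f _ => hwitness f)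
    _ = _ := by
        rw [card_forall_row_ne, Fintype.card_coe, Fintype.card_subtype_compl, Fintype.card_coe]

variable (V) in
def extensionPairs (k : ℕ) : Finset (Finset V × Finset V) :=
  {XY | Disjoint XY.1 XY.2 ∧ #XY.1 + #XY.2 < k}

theorem card_extensionPairs_le (k : ℕ) :
    #(extensionPairs V k) ≤ (k * (Fintype.card V + 1) ^ k) ^ 2 := by
  set n := Fintype.card V
  set S : Finset (Finset V) := (range k).biUnion fun j => powersetCard j univ
  have hS : #S ≤ k * (n + 1) ^ k := by
    refine card_biUnion_le.trans <|
      (sum_le_card_nsmul _ _ ((n + 1) ^ k) fun j hj => ?_).trans (by simp)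
    rw [card_powersetCard, card_univ]
    exact (Nat.choose_le_pow n j).trans <| (Nat.pow_le_pow_left n.le_succ j).trans <|
      Nat.pow_le_pow_right n.succ_pos (mem_range.1 hj).le
  have hsub : extensionPairs V k ⊆ S ×ˢ S := by
    rintro ⟨X, Y⟩ hXY
    simp only [extensionPairs, mem_filter, mem_univ, true_and] at hXY
    simp only [S, mem_product, mem_biUnion, mem_range, mem_powersetCard, subset_univ, true_and]
    exact ⟨⟨_, by omega, rfl⟩, ⟨_, by omega, rfl⟩⟩
  calc #(extensionPairs V k) ≤ #S * #S := (card_le_card hsub).trans (card_product S S).le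
    _ ≤ (k * (n + 1) ^ k) ^ 2 := by rw [sq]; exact Nat.mul_le_mul hS hS

open scoped Classical in
theorem card_not_hasExtensionProperty_le_sum (k : ℕ) :
    #{f : Sym2 V → Bool | ¬HasExtensionProperty (edgeGraph f) k} ≤
      ∑ XY ∈ extensionPairs V k,
        #{f : Sym2 V → Bool | ¬∃ z, IsExtensionWitness (edgeGraph f) XY.1 XY.2 z} := by
  refine (card_le_card fun f hf => ?_).trans card_biUnion_le
  simp only [HasExtensionProperty, mem_filter, mem_univ, true_and, not_forall] at hf
  obtain ⟨X, Y, hXY, hcard, hf⟩ := hf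
  exact mem_biUnion.2
    ⟨(X, Y), by simp [extensionPairs, hXY, hcard], by simpa [IsExtensionWitness] using hf⟩

open scoped Classical in
theorem card_not_exists_isExtensionWitness_mul_le {k : ℕ} {ρ : ℝ} (hρ : 1 - 2⁻¹ ^ k ≤ ρ)
    (hρ1 : ρ ≤ 1) {XY : Finset V × Finset V} (hXY : XY ∈ extensionPairs V k) :
    (#{f : Sym2 V → Bool | ¬∃ z, IsExtensionWitness (edgeGraph f) XY.1 XY.2 z} : ℝ) * ρ ^ k ≤
      ρ ^ (Fintype.card V + 1) * 2 ^ Fintype.card (Sym2 V) := by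
  obtain ⟨X, Y⟩ := XY
  simp only [extensionPairs, mem_filter, mem_univ, true_and] at hXY
  have hs : #(X ∪ Y) < k := (card_union_of_disjoint hXY.1).trans_lt hXY.2
  have hx : (0 : ℝ) ≤ 1 - 2⁻¹ ^ #(X ∪ Y) := sub_nonneg.2 (pow_le_one₀ (by norm_num) (by norm_num))
  have hxρ : 1 - (2⁻¹ : ℝ) ^ #(X ∪ Y) ≤ ρ :=
    le_trans (sub_le_sub_left (pow_le_pow_of_le_one (by norm_num) (by norm_num) hs.le) 1) hρ
  calc _ ≤ (1 - 2⁻¹ ^ #(X ∪ Y)) ^ (Fintype.card V - #(X ∪ Y)) * 2 ^ Fintype.card (Sym2 V) *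
        ρ ^ k :=
        mul_le_mul_of_nonneg_right (card_not_exists_isExtensionWitness_le hXY.1)
          (pow_nonneg (hx.trans hxρ) _)
    _ = (1 - 2⁻¹ ^ #(X ∪ Y)) ^ (Fintype.card V - #(X ∪ Y)) * ρ ^ k *
        2 ^ Fintype.card (Sym2 V) := by ring
    _ ≤ ρ ^ (Fintype.card V + 1) * 2 ^ Fintype.card (Sym2 V) :=
        mul_le_mul_of_nonneg_right (pow_sub_mul_pow_le hx hxρ hρ1 (card_le_univ _) hs)
          (by positivity)

open scoped Classical in
theorem card_not_hasExtensionProperty_mul_le {k : ℕ} {ρ : ℝ} (hρ : 1 - 2⁻¹ ^ k ≤ ρ)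
    (hρ1 : ρ ≤ 1) :
    (#{f : Sym2 V → Bool | ¬HasExtensionProperty (edgeGraph f) k} : ℝ) * ρ ^ k ≤
      ((k : ℝ) * (Fintype.card V + 1) ^ k) ^ 2 * ρ ^ (Fintype.card V + 1) *
        2 ^ Fintype.card (Sym2 V) := by
  have hρ0 : 0 ≤ ρ := (sub_nonneg.2 (pow_le_one₀ (by norm_num) (by norm_num))).trans hρ
  calc _ ≤ (∑ XY ∈ extensionPairs V k,
        (#{f : Sym2 V → Bool | ¬∃ z, IsExtensionWitness (edgeGraph f) XY.1 XY.2 z} : ℝ)) * ρ ^ k :=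
        mul_le_mul_of_nonneg_right (by exact_mod_cast card_not_hasExtensionProperty_le_sum k)
          (pow_nonneg hρ0 _)
    _ ≤ #(extensionPairs V k) * (ρ ^ (Fintype.card V + 1) * 2 ^ Fintype.card (Sym2 V)) := by
        rw [sum_mul, ← nsmul_eq_mul]
        exact sum_le_card_nsmul _ _ _ fun XY hXY =>
          card_not_exists_isExtensionWitness_mul_le hρ hρ1 hXY
    _ ≤ _ := by
        rw [← mul_assoc]
        refine mul_le_mul_of_nonneg_right (mul_le_mul_of_nonneg_right ?_ (pow_nonneg hρ0 _))
          (by positivity)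
        exact_mod_cast card_extensionPairs_le k

end RandomGraph

theorem exists_hasExtensionProperty (k : ℕ) :
    ∃ n, ∃ G : SimpleGraph (Fin n), HasExtensionProperty G k := by
  classical
  -- Any `ρ ≥ 1 - 2^{-k}` would do; the exponent `k + 1` keeps `ρ` positive when `k = 0`.
  set ρ : ℝ := 1 - 2⁻¹ ^ (k + 1)
  have hρ0 : 0 < ρ := sub_pos.2 (pow_lt_one₀ (by norm_num) (by norm_num) k.succ_ne_zero)
  have hρ1 : ρ < 1 := sub_lt_self _ (by positivity)
  have hρ : 1 - 2⁻¹ ^ k ≤ ρ :=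
    sub_le_sub_left (pow_le_pow_of_le_one (by norm_num) (by norm_num) k.le_succ) 1
  obtain ⟨n, hn⟩ := exists_sq_mul_pow_lt (abs_lt.2 ⟨by linarith, hρ1⟩) k (pow_pos hρ0 k)
  by_contra! hfail
  have hall : #{f : Sym2 (Fin n) → Bool | ¬HasExtensionProperty (edgeGraph f) k} =
      2 ^ Fintype.card (Sym2 (Fin n)) := by
    rw [filter_true_of_mem fun f _ => hfail n _, card_univ, Fintype.card_fun, Fintype.card_bool]
  have h := card_not_hasExtensionProperty_mul_le (V := Fin n) hρ hρ1.le
  rw [hall, Fintype.card_fin] at h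
  have h2N : (0 : ℝ) < 2 ^ Fintype.card (Sym2 (Fin n)) := by positivity
  push_cast at h
  exact (h.trans_lt (mul_lt_mul_of_pos_right hn h2N)).ne (mul_comm _ _)

theorem exists_graph_with_extension_property_containing_all_small_graphs_general
    (k ℓ : ℕ) :
    ∃ (n : ℕ) (G : SimpleGraph (Fin n)),
      HasExtensionProperty G k ∧
      ∀ F : SimpleGraph (Fin ℓ), Nonempty (F ↪g G) := by
  obtain ⟨n, G, hG⟩ := exists_hasExtensionProperty (max k ℓ)
  exact ⟨n, G, hG.mono (le_max_left k ℓ), fun F => hG.isIndContained (by simp) F⟩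

theorem exists_graph_with_extension_property_containing_all_small_graphs
    (k ℓ : ℕ) (hk : 0 < k) (hℓ : 0 < ℓ) :
    ∃ (n : ℕ) (G : SimpleGraph (Fin n)),
      HasExtensionProperty G k ∧
      ∀ F : SimpleGraph (Fin ℓ), Nonempty (F ↪g G) :=
  exists_graph_with_extension_property_containing_all_small_graphs_general k ℓ
end

section
/- For every integer k ≥ 2, there exists a finite simple graph H with chromatic number at most k that has the k-extension property. -/
open Finset

section Counting

variable {ι β : Type*} [Fintype ι] [DecidableEq ι] [Fintype β] [DecidableEq β]

/-- The fibres of the restriction to the complement of `S` are boxes with sides of size at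
most `b`. -/
theorem card_filter_forall_mem_apply_le (S : Finset ι) (P : ι → (ι → β) → β → Prop)
    [∀ z ω, DecidablePred (P z ω)] {b : ℕ}
    (hP : ∀ z ∈ S, ∀ ω ω' : ι → β, (∀ v ∉ S, ω v = ω' v) → P z ω = P z ω')
    (hb : ∀ z ∈ S, ∀ ω, #{d | P z ω d} ≤ b) :
    #{ω : ι → β | ∀ z ∈ S, P z ω (ω z)} ≤
      b ^ #S * Fintype.card β ^ (Fintype.card ι - #S) := by
  set s : Finset (ι → β) := {ω | ∀ z ∈ S, P z ω (ω z)}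
  let restrict (ω : ι → β) (v : {v // v ∉ S}) : β := ω v
  calc #s ≤ b ^ #S * #(s.image restrict) := card_le_mul_card_image s _ ?_
    _ ≤ b ^ #S * Fintype.card β ^ (Fintype.card ι - #S) := by
      gcongr
      exact (card_le_univ _).trans_eq (by simp [Fintype.card_subtype_compl])
  intro g hg
  obtain ⟨ω₀, -, rfl⟩ := mem_image.1 hg
  calc #{ω ∈ s | restrict ω = restrict ω₀}
      ≤ #(Fintype.piFinset fun v =>
          if v ∈ S then ({d | P v ω₀ d} : Finset β) else {ω₀ v}) := by
        refine card_le_card fun ω hω => ?_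
        simp only [s, mem_filter, mem_univ, true_and] at hω
        obtain ⟨hωS, hωω₀⟩ := hω
        have hagree (v : ι) (hv : v ∉ S) : ω v = ω₀ v := congr_fun hωω₀ ⟨v, hv⟩
        refine Fintype.mem_piFinset.2 fun v => ?_
        split_ifs with hv
        · simpa [← hP v hv ω ω₀ hagree] using hωS v hv
        · simp [hagree v hv]
    _ = ∏ v ∈ S, #{d | P v ω₀ d} := by simp [apply_ite card, prod_ite_mem]
    _ ≤ b ^ #S := prod_le_pow_card _ _ _ fun v hv => hb v hv ω₀

theorem card_filter_forall_mem_apply_eq (D : Finset ι) (g : ι → β) :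
    #{d : ι → β | ∀ v ∈ D, d v = g v} = Fintype.card β ^ (Fintype.card ι - #D) := by
  have hpi : ({d : ι → β | ∀ v ∈ D, d v = g v} : Finset _) =
      Fintype.piFinset fun v => if v ∈ D then {g v} else univ := by
    ext d
    simp only [mem_filter, mem_univ, true_and, Fintype.mem_piFinset]
    refine ⟨fun h v => ?_, fun h v hv => ?_⟩
    · split_ifs with hv <;> simp [h, hv]
    · simpa [hv] using h v
  rw [hpi, Fintype.card_piFinset]
  simp [apply_ite card, prod_ite, ← card_compl, compl_eq_univ_sdiff, filter_notMem_eq_sdiff]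

end Counting

theorem one_sub_inv_two_pow_nonneg (k : ℕ) : 0 ≤ 1 - (2⁻¹ : ℝ) ^ k :=
  sub_nonneg.2 (pow_le_one₀ (by norm_num) (by norm_num))

theorem card_filter_card_add_card_lt_le {α : Type*} [Fintype α] [DecidableEq α] (k : ℕ) :
    #{w : Finset α × Finset α | #w.1 + #w.2 < k} ≤ (k * (Fintype.card α + 1) ^ k) ^ 2 := by
  have hsmall : #{s : Finset α | #s < k} ≤ k * (Fintype.card α + 1) ^ k := by
    calc #{s : Finset α | #s < k}
        ≤ #((range k).biUnion fun j => powersetCard j (univ : Finset α)) :=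
          card_le_card fun s hs =>
            mem_biUnion.2 ⟨#s, by simpa using hs, mem_powersetCard_univ.2 rfl⟩
      _ ≤ ∑ j ∈ range k, #(powersetCard j (univ : Finset α)) := card_biUnion_le
      _ ≤ ∑ _j ∈ range k, (Fintype.card α + 1) ^ k := sum_le_sum fun j hj => ?_
      _ = _ := by simp
    rw [card_powersetCard, card_univ]
    calc _ ≤ Fintype.card α ^ j := Nat.choose_le_pow _ _
      _ ≤ (Fintype.card α + 1) ^ j := Nat.pow_le_pow_left (Nat.le_succ _) _
      _ ≤ _ := Nat.pow_le_pow_right (Nat.succ_pos _) (mem_range.1 hj).le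
  calc #{w : Finset α × Finset α | #w.1 + #w.2 < k}
      ≤ #(({s | #s < k} : Finset (Finset α)) ×ˢ ({s | #s < k} : Finset (Finset α))) :=
        card_le_card fun w hw => by
          simp only [mem_filter, mem_product, mem_univ, true_and] at hw ⊢; omega
    _ ≤ _ := by rw [card_product, sq]; exact Nat.mul_le_mul hsmall hsmall

theorem card_filter_fst_eq {α β : Type*} [Fintype α] [DecidableEq α] [Fintype β] (a : α) :
    #{v : α × β | v.1 = a} = Fintype.card β := by
  rw [show ({v : α × β | v.1 = a} : Finset _) = {a} ×ˢ univ by ext ⟨b, x⟩; simp [eq_comm]]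
  simp

theorem exists_mul_pow_mul_pow_sub_lt_one {q : ℝ} (hq₀ : 0 < q) (hq₁ : q < 1)
    (C : ℝ) (m j : ℕ) :
    ∃ r : ℕ, 0 < r ∧ C * (r : ℝ) ^ m * q ^ (r - j) < 1 := by
  have h := (tendsto_pow_const_mul_const_pow_of_abs_lt_one m
    (abs_lt.2 ⟨by linarith, hq₁⟩)).const_mul (C / q ^ j)
  rw [mul_zero] at h
  obtain ⟨r, hr, hr₁, hrj⟩ := ((h.eventually (gt_mem_nhds one_pos)).and
    ((Filter.eventually_ge_atTop 1).and (Filter.eventually_ge_atTop j))).exists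
  refine ⟨r, hr₁, ?_⟩
  calc C * (r : ℝ) ^ m * q ^ (r - j) = C / q ^ j * (r ^ m * q ^ r) := by
        rw [pow_sub₀ _ hq₀.ne' hrj]; ring
    _ < 1 := hr

theorem SimpleGraph.Iso.hasExtensionProperty {V W : Type} {G : SimpleGraph V}
    {G' : SimpleGraph W} {k : ℕ} (e : G ≃g G') (h : HasExtensionProperty G k) :
    HasExtensionProperty G' k := by
  intro X Y hXY hcard
  obtain ⟨z, hzX, hzY, hX, hY⟩ :=
    h (X.map e.toEquiv.symm.toEmbedding) (Y.map e.toEquiv.symm.toEmbedding)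
      (disjoint_map _ |>.2 hXY) (by simpa using hcard)
  refine ⟨e z, ?_, ?_, fun x hx => ?_, fun y hy => ?_⟩
  · simpa using hzX
  · simpa using hzY
  · simpa using e.map_adj_iff.2 (hX (e.symm x) (by simpa using hx))
  · simpa using fun h => hY (e.symm y) (by simpa using hy) (by simpa using e.symm.map_adj_iff.2 h)

section XorGraph

variable {V : Type} {ι : Type*}

def xorGraph (p : V → ι) (ω : V → V → Bool) : SimpleGraph V where
  Adj u v := p u ≠ p v ∧ ω u v ≠ ω v u
  symm := ⟨fun _ _ h => ⟨h.1.symm, h.2.symm⟩⟩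
  loopless := ⟨fun _ h => h.1 rfl⟩

theorem xorGraph_adj {p : V → ι} {ω : V → V → Bool} {u v : V} :
    (xorGraph p ω).Adj u v ↔ p u ≠ p v ∧ ω u v ≠ ω v u := Iff.rfl

theorem colorable_xorGraph [Fintype ι] (p : V → ι) (ω : V → V → Bool) :
    (xorGraph p ω).Colorable (Fintype.card ι) :=
  (SimpleGraph.Coloring.mk p fun h => (xorGraph_adj.1 h).1).colorable

variable [Fintype V] [DecidableEq V] [DecidableEq ι]

def extensionCandidates (p : V → ι) (X Y : Finset V) : Finset V :=
  {z | z ∉ X ∪ Y ∧ ∀ x ∈ X, p z ≠ p x}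

/-- With `d` as its row, `z` is joined in `xorGraph` to every vertex of `X` outside its part and to
no vertex of `Y \ X`. -/
def RealizesPattern (X Y : Finset V) (ω : V → V → Bool) (z : V) (d : V → Bool) : Prop :=
  ∀ v ∈ X ∪ Y, d v = (ω v z ^^ decide (v ∈ X))

instance (X Y : Finset V) (ω : V → V → Bool) (z : V) :
    DecidablePred (RealizesPattern X Y ω z) :=
  fun _ => inferInstanceAs (Decidable (∀ _ ∈ _, _))

theorem hasExtensionProperty_xorGraph {p : V → ι} {ω : V → V → Bool} {k : ℕ}
    (h : ∀ X Y : Finset V, Disjoint X Y → #X + #Y < k →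
      ∃ z ∈ extensionCandidates p X Y, RealizesPattern X Y ω z (ω z)) :
    HasExtensionProperty (xorGraph p ω) k := by
  intro X Y hXY hcard
  obtain ⟨z, hz, hzω⟩ := h X Y hXY hcard
  simp only [extensionCandidates, mem_filter, mem_univ, true_and, mem_union, not_or] at hz
  obtain ⟨⟨hzX, hzY⟩, hpz⟩ := hz
  refine ⟨z, hzX, hzY, fun x hx => xorGraph_adj.2 ⟨hpz x hx, ?_⟩,
    fun y hy hadj => (xorGraph_adj.1 hadj).2 ?_⟩
  · simp [hzω x (mem_union_left _ hx), hx]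
  · simp [hzω y (mem_union_right _ hy), disjoint_right.1 hXY hy]

theorem le_card_extensionCandidates {k r : ℕ} {p : V → Fin k} {X : Finset V} (Y : Finset V)
    (hX : #X < k) (hp : ∀ i, r ≤ #{v | p v = i}) : r - #Y ≤ #(extensionCandidates p X Y) := by
  obtain ⟨i, -, hi⟩ := exists_mem_notMem_of_card_lt_card (s := X.image p) (t := univ)
    (by simpa using card_image_le.trans_lt hX)
  calc r - #Y ≤ #({v | p v = i} : Finset V) - #Y := Nat.sub_le_sub_right (hp i) _
    _ ≤ #(({v | p v = i} : Finset V) \ Y) := le_card_sdiff _ _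
    _ ≤ _ := card_le_card fun z hz => by
      simp only [mem_sdiff, mem_filter, mem_univ, true_and] at hz
      simp only [extensionCandidates, mem_filter, mem_univ, true_and, mem_union, not_or]
      refine ⟨⟨fun hzX => hi (hz.1 ▸ mem_image_of_mem p hzX), hz.2⟩,
        fun x hx hpx => hi (hz.1 ▸ hpx ▸ mem_image_of_mem p hx)⟩

theorem card_filter_not_realizesPattern (X Y : Finset V) (ω : V → V → Bool) (z : V) :
    #{d | ¬RealizesPattern X Y ω z d} =
      2 ^ Fintype.card V - 2 ^ (Fintype.card V - #(X ∪ Y)) := by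
  have hgood := card_filter_forall_mem_apply_eq (X ∪ Y) fun v => ω v z ^^ decide (v ∈ X)
  rw [Fintype.card_bool] at hgood
  rw [filter_not, card_sdiff_of_subset (filter_subset _ _), card_univ, Fintype.card_fun,
    Fintype.card_bool, ← hgood]
  rfl

theorem card_filter_forall_not_realizesPattern_le {C X Y : Finset V} (hC : Disjoint C (X ∪ Y)) :
    (#{ω : V → V → Bool | ∀ z ∈ C, ¬RealizesPattern X Y ω z (ω z)} : ℝ) ≤
      (1 - 2⁻¹ ^ #(X ∪ Y)) ^ #C * Fintype.card (V → V → Bool) := by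
  set n := Fintype.card V
  have hlocal : ∀ z ∈ C, ∀ ω ω' : V → V → Bool, (∀ v ∉ C, ω v = ω' v) →
      (¬RealizesPattern X Y ω z ·) = (¬RealizesPattern X Y ω' z ·) := by
    intro z _ ω ω' h
    ext d
    exact not_congr (forall₂_congr fun v hv => by rw [h v (disjoint_right.1 hC hv)])
  have hcount := card_filter_forall_mem_apply_le C (fun z ω d => ¬RealizesPattern X Y ω z d)
    hlocal fun z _ ω => (card_filter_not_realizesPattern X Y ω z).le
  simp only [Fintype.card_fun, Fintype.card_bool] at hcount
  have hD : #(X ∪ Y) ≤ n := card_le_univ _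
  have hC : #C ≤ n := card_le_univ _
  have hbad : ((2 ^ n - 2 ^ (n - #(X ∪ Y)) : ℕ) : ℝ) = 2 ^ n * (1 - 2⁻¹ ^ #(X ∪ Y)) := by
    rw [Nat.cast_sub (Nat.pow_le_pow_right two_pos (Nat.sub_le _ _))]
    push_cast
    rw [pow_sub₀ _ two_ne_zero hD, inv_pow]
    ring
  calc _ ≤ (((2 ^ n - 2 ^ (n - #(X ∪ Y))) ^ #C * (2 ^ n) ^ (n - #C) : ℕ) : ℝ) := by
        exact_mod_cast hcount
    _ = _ := by
      push_cast
      rw [hbad, mul_pow, mul_right_comm, ← pow_add, Nat.add_sub_cancel' hC, mul_comm]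
      simp [n]

theorem card_filter_forall_extensionCandidates_not_realizesPattern_le {k r : ℕ} {p : V → Fin k}
    (hp : ∀ i, r ≤ #{v | p v = i}) {X Y : Finset V} (hXY : #X + #Y < k) :
    (#{ω : V → V → Bool | ∀ z ∈ extensionCandidates p X Y,
        ¬RealizesPattern X Y ω z (ω z)} : ℝ) ≤
      (1 - 2⁻¹ ^ k) ^ (r - k) * Fintype.card (V → V → Bool) := by
  have hD : #(X ∪ Y) ≤ k := (card_union_le X Y).trans hXY.le
  have hC : r - k ≤ #(extensionCandidates p X Y) :=
    (Nat.sub_le_sub_left (by omega) r).trans (le_card_extensionCandidates Y (by omega) hp)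
  have hdisj : Disjoint (extensionCandidates p X Y) (X ∪ Y) :=
    disjoint_left.2 fun z hz => by simp only [extensionCandidates, mem_filter] at hz; exact hz.2.1
  have hbase : 1 - (2⁻¹ : ℝ) ^ #(X ∪ Y) ≤ 1 - 2⁻¹ ^ k :=
    sub_le_sub_left (pow_le_pow_of_le_one (by norm_num) (by norm_num) hD) 1
  refine (card_filter_forall_not_realizesPattern_le hdisj).trans
    (mul_le_mul_of_nonneg_right ?_ (Nat.cast_nonneg _))
  exact (pow_le_pow_left₀ (one_sub_inv_two_pow_nonneg _) hbase _).trans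
    (pow_le_pow_of_le_one (one_sub_inv_two_pow_nonneg k) (sub_le_self _ (by positivity)) hC)

open scoped Classical in
theorem card_filter_not_hasExtensionProperty_le {k r : ℕ} (p : V → Fin k)
    (hp : ∀ i, r ≤ #{v | p v = i}) :
    (#{ω : V → V → Bool | ¬HasExtensionProperty (xorGraph p ω) k} : ℝ) ≤
      (k * (Fintype.card V + 1) ^ k) ^ 2 *
        ((1 - 2⁻¹ ^ k) ^ (r - k) * Fintype.card (V → V → Bool)) := by
  set W : Finset (Finset V × Finset V) := {w | #w.1 + #w.2 < k}
  set B : Finset V × Finset V → Finset (V → V → Bool) := fun w =>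
    {ω | ∀ z ∈ extensionCandidates p w.1 w.2, ¬RealizesPattern w.1 w.2 ω z (ω z)}
  have hsub : ({ω | ¬HasExtensionProperty (xorGraph p ω) k} : Finset (V → V → Bool)) ⊆
      W.biUnion B := by
    intro ω hω
    simp only [B, mem_filter, mem_univ, true_and, mem_biUnion] at hω ⊢
    contrapose! hω
    exact hasExtensionProperty_xorGraph fun X Y _ hXY => hω (X, Y) (by simpa [W] using hXY)
  calc _ ≤ (#(W.biUnion B) : ℝ) := by exact_mod_cast card_le_card hsub
    _ ≤ ∑ w ∈ W, (#(B w) : ℝ) := by exact_mod_cast card_biUnion_le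
    _ ≤ ∑ _w ∈ W, (1 - 2⁻¹ ^ k) ^ (r - k) * (Fintype.card (V → V → Bool) : ℝ) :=
        sum_le_sum fun w hw =>
          card_filter_forall_extensionCandidates_not_realizesPattern_le hp (by simpa [W] using hw)
    _ ≤ _ := by
        rw [sum_const, nsmul_eq_mul]
        refine mul_le_mul_of_nonneg_right (by exact_mod_cast card_filter_card_add_card_lt_le k)
          (mul_nonneg (pow_nonneg (one_sub_inv_two_pow_nonneg k) _) (Nat.cast_nonneg _))

end XorGraph

theorem exists_xorGraph_hasExtensionProperty {k : ℕ} (hk : 0 < k) :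
    ∃ r, ∃ ω : Fin k × Fin r → Fin k × Fin r → Bool,
      HasExtensionProperty (xorGraph Prod.fst ω) k := by
  classical
  have hq₀ : 0 < 1 - (2⁻¹ : ℝ) ^ k :=
    sub_pos.2 (pow_lt_one₀ (by norm_num) (by norm_num) hk.ne')
  have hq₁ : 1 - (2⁻¹ : ℝ) ^ k < 1 := sub_lt_self _ (by positivity)
  obtain ⟨r, hr, hsmall⟩ :=
    exists_mul_pow_mul_pow_sub_lt_one hq₀ hq₁ (k ^ 2 * (k + 1) ^ (2 * k)) (2 * k) k
  refine ⟨r, ?_⟩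
  by_contra! hbad
  set Ω := Fin k × Fin r → Fin k × Fin r → Bool
  have hcount := card_filter_not_hasExtensionProperty_le (Prod.fst : Fin k × Fin r → Fin k)
    (r := r) fun i => by rw [card_filter_fst_eq, Fintype.card_fin]
  rw [filter_true_of_mem fun ω _ => hbad ω, card_univ] at hcount
  have hV : (Fintype.card (Fin k × Fin r) + 1 : ℝ) ≤ (k + 1) * r := by
    simp only [Fintype.card_prod, Fintype.card_fin, Nat.cast_mul]
    have : (1 : ℝ) ≤ r := by exact_mod_cast hr
    nlinarith
  have hΩ : (0 : ℝ) < Fintype.card Ω := by exact_mod_cast Fintype.card_pos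
  refine lt_irrefl (Fintype.card Ω : ℝ) ?_
  calc _ ≤ _ := hcount
    _ ≤ (k * ((k + 1) * r) ^ k) ^ 2 * ((1 - 2⁻¹ ^ k) ^ (r - k) * (Fintype.card Ω : ℝ)) := by
        gcongr
    _ = (k ^ 2 * (k + 1) ^ (2 * k) * r ^ (2 * k) * (1 - 2⁻¹ ^ k) ^ (r - k)) *
          (Fintype.card Ω : ℝ) := by
        simp only [mul_pow, ← pow_mul]
        ring
    _ < 1 * (Fintype.card Ω : ℝ) := by gcongr
    _ = _ := one_mul _

theorem exists_small_chromatic_graph_with_extension_property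
    (k : ℕ) (hk : 2 ≤ k) :
    ∃ (n : ℕ) (H : SimpleGraph (Fin n)),
      H.chromaticNumber ≤ k ∧ HasExtensionProperty H k := by
  obtain ⟨r, ω, hω⟩ := exists_xorGraph_hasExtensionProperty (by omega : 0 < k)
  set G := xorGraph (Prod.fst : Fin k × Fin r → Fin k) ω
  refine ⟨_, G.overFin rfl, ?_, (G.overFinIso rfl).hasExtensionProperty hω⟩
  have hG : G.Colorable k := by simpa using colorable_xorGraph Prod.fst ω
  exact (hG.of_hom (G.overFinIso rfl).symm.toHom).chromaticNumber_le
end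

section
/- For every integer ℓ ≥ 2, there exists a finite simple graph H that contains no clique on ℓ vertices (i.e., H is K_ℓ-free) and has the (ℓ−1)-extension property. (Together with the fact that every graph with the ℓ-extension property contains K_ℓ, this shows that the extension index of the complete graph K_ℓ equals ℓ.) -/
open Finset

theorem card_filter_not_surjective_le {κ δ : Type*} [Fintype κ] [DecidableEq κ] [Fintype δ]
    [DecidableEq δ] :
    #{g : κ → δ | ¬ Function.Surjective g}
      ≤ Fintype.card δ * (Fintype.card δ - 1) ^ Fintype.card κ := by
  have hsub : ({g : κ → δ | ¬ Function.Surjective g} : Finset _)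
      ⊆ univ.biUnion fun d => {g | ∀ b, g b ≠ d} := by
    intro g hg
    simpa only [Function.Surjective, not_forall, not_exists, mem_filter, mem_univ, true_and,
      mem_biUnion] using hg
  have hmiss (d : δ) :
      #{g : κ → δ | ∀ b, g b ≠ d} = (Fintype.card δ - 1) ^ Fintype.card κ := by
    rw [← Fintype.card_subtype,
      Fintype.card_congr (Equiv.subtypePiEquivPi (p := fun _ g => g ≠ d)), Fintype.card_pi]
    simp [Fintype.card_subtype_compl]
  calc _ ≤ _ := card_le_card hsub
    _ ≤ _ := card_biUnion_le
    _ = _ := by simp [hmiss]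

theorem card_filter_comp_embedding_mul {ι E β : Type*} [Fintype ι] [DecidableEq ι] [Fintype E]
    [DecidableEq E] [Fintype β] (e : ι ↪ E) (P : (ι → β) → Prop) [DecidablePred P] :
    #{f : E → β | P (f ∘ e)} * Fintype.card β ^ Fintype.card ι
      = #{g : ι → β | P g} * Fintype.card β ^ Fintype.card E := by
  classical
  let C := {x : E // x ∉ Set.range e}
  let σ : ι ⊕ C ≃ E :=
    (Equiv.sumCongr (Equiv.ofInjective e e.injective) (Equiv.refl C)).trans (Equiv.sumCompl _)
  let Φ : (E → β) ≃ (ι → β) × (C → β) :=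
    (σ.arrowCongr (Equiv.refl β)).symm.trans (Equiv.sumArrowEquivProdArrow ι C β)
  have hΦ (f : E → β) : (Φ f).1 = f ∘ e := rfl
  have hsplit : #{f : E → β | P (f ∘ e)}
      = #{g : ι → β | P g} * Fintype.card β ^ Fintype.card C := by
    rw [← Fintype.card_subtype, ← Fintype.card_subtype, ← Fintype.card_fun, ← Fintype.card_prod]
    exact Fintype.card_congr ((Φ.subtypeEquiv fun f => by rw [hΦ]).trans
      Equiv.prodSubtypeFstEquivSubtypeProd)
  have hE : Fintype.card E = Fintype.card ι + Fintype.card C := by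
    rw [← Fintype.card_sum, Fintype.card_congr σ]
  rw [hsplit, hE, pow_add, mul_assoc, mul_comm (_ ^ Fintype.card C)]

theorem Finset.exists_forall_notMem_of_sum_card_lt {α ι : Type*} [Fintype α] [DecidableEq α]
    {s : Finset ι} {B : ι → Finset α} (h : ∑ i ∈ s, #(B i) < Fintype.card α) :
    ∃ a, ∀ i ∈ s, a ∉ B i := by
  obtain ⟨a, -, ha⟩ := exists_mem_notMem_of_card_lt_card (card_biUnion_le.trans_lt h)
  exact ⟨a, fun i hi hai => ha (mem_biUnion.2 ⟨i, hi, hai⟩)⟩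

open Filter in
theorem eventually_mul_pow_mul_pow_lt (C m : ℕ) {a b : ℕ} (hab : a < b) :
    ∀ᶠ N in atTop, C * N ^ m * a ^ N < b ^ N := by
  have hb : (0 : ℝ) < b := by exact_mod_cast (Nat.zero_le a).trans_lt hab
  set r : ℝ := a / b
  have hr : |r| < 1 := by
    rw [abs_of_nonneg (by positivity), div_lt_one hb]
    exact_mod_cast hab
  have hsmall : ∀ᶠ N : ℕ in atTop, (C + 1) * ((N : ℝ) ^ m * r ^ N) < 1 := by
    have := (tendsto_pow_const_mul_const_pow_of_abs_lt_one m hr).const_mul ((C : ℝ) + 1)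
    rw [mul_zero] at this
    exact this.eventually (gt_mem_nhds one_pos)
  filter_upwards [hsmall] with N hN
  have ha : (a : ℝ) ^ N = r ^ N * b ^ N := by rw [← mul_pow, div_mul_cancel₀ _ hb.ne']
  suffices (C : ℝ) * N ^ m * a ^ N < b ^ N by exact_mod_cast this
  calc (C : ℝ) * N ^ m * a ^ N ≤ (C + 1) * (N ^ m * r ^ N) * b ^ N := by
        rw [ha]
        have : 0 ≤ (N : ℝ) ^ m * r ^ N * b ^ N := by positivity
        nlinarith
    _ < 1 * b ^ N := by gcongr
    _ = b ^ N := one_mul _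

theorem HasExtensionProperty.of_iso {V W : Type} {G : SimpleGraph V} {G' : SimpleGraph W}
    {k : ℕ} (h : HasExtensionProperty G k) (φ : G ≃g G') : HasExtensionProperty G' k := by
  intro X Y hXY hcard
  let ψ : W ↪ V := φ.toEquiv.symm.toEmbedding
  obtain ⟨z, hzX, hzY, hadj, hnadj⟩ := h (X.map ψ) (Y.map ψ) ((disjoint_map ψ).2 hXY)
    (by simpa only [card_map] using hcard)
  have hφψ (w : W) : φ (ψ w) = w := φ.toEquiv.apply_symm_apply w
  have hmem (S : Finset W) : φ z ∈ S ↔ z ∈ S.map ψ := by simp [ψ]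
  refine ⟨φ z, fun h => hzX ((hmem X).1 h), fun h => hzY ((hmem Y).1 h), fun x hx => ?_,
    fun y hy => ?_⟩
  · simpa only [hφψ] using φ.map_adj_iff.2 (hadj (ψ x) (mem_map_of_mem ψ hx))
  · simpa only [hφψ] using mt φ.map_adj_iff.1 (hnadj (ψ y) (mem_map_of_mem ψ hy))

def partiteGraph {α β : Type*} (f : Sym2 (α × β) → Bool) : SimpleGraph (α × β) where
  Adj u v := u.1 ≠ v.1 ∧ f s(u, v)
  symm := ⟨fun _ _ h => ⟨h.1.symm, Sym2.eq_swap ▸ h.2⟩⟩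
  loopless := ⟨fun _ h => h.1 rfl⟩

theorem partiteGraph_cliqueFree {α β : Type*} [Fintype α] (f : Sym2 (α × β) → Bool) :
    (partiteGraph f).CliqueFree (Fintype.card α + 1) :=
  (SimpleGraph.Coloring.mk (G := partiteGraph f) Prod.fst fun h => h.1).colorable.cliqueFree
    (Nat.lt_succ_self _)

def neighborPattern {α β : Type*} (f : Sym2 (α × β) → Bool) (c : α) (T : Finset (α × β))
    (b : β) : T → Bool :=
  fun v => f s((c, b), v)

theorem hasExtensionProperty_partiteGraph {α β : Type} [Fintype α] [DecidableEq α] [Fintype β]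
    [DecidableEq β] [Nonempty β] (f : Sym2 (α × β) → Bool)
    (hf : ∀ c (T : Finset (α × β)), #T = Fintype.card α - 1 → (∀ v ∈ T, v.1 ≠ c) →
      Function.Surjective (neighborPattern f c T)) :
    HasExtensionProperty (partiteGraph f) (Fintype.card α) := by
  intro X Y hXY hcard
  have hsmall : #(X ∪ Y) ≤ Fintype.card α - 1 := by
    have := card_union_le X Y
    omega
  obtain ⟨c, -, hc⟩ := exists_mem_notMem_of_card_lt_card (s := (X ∪ Y).image Prod.fst)
    (t := univ) (by rw [card_univ]; exact card_image_le.trans_lt (by omega))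
  have hXY_avoid : X ∪ Y ⊆ ({v | v.1 ≠ c} : Finset (α × β)) := fun v hv =>
    mem_filter.2 ⟨mem_univ _, fun h => hc (mem_image.2 ⟨v, hv, h⟩)⟩
  have hroom : Fintype.card α - 1 ≤ #({v | v.1 ≠ c} : Finset (α × β)) := by
    obtain ⟨b₀⟩ := ‹Nonempty β›
    rw [← card_univ, ← card_erase_of_mem (mem_univ c)]
    refine card_le_card_of_injOn (fun a => (a, b₀)) (fun a ha => ?_)
      (fun a _ a' _ h => congrArg Prod.fst h)
    simpa using ne_of_mem_erase ha
  obtain ⟨T, hXYT, hT_avoid, hTcard⟩ := exists_subsuperset_card_eq hXY_avoid hsmall hroom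
  have hT (v) (hv : v ∈ T) : v.1 ≠ c := (mem_filter.1 (hT_avoid hv)).2
  obtain ⟨b, hb⟩ := hf c T hTcard hT (fun v => decide (v.1 ∈ X))
  have hpattern (v) (hv : v ∈ T) : f s((c, b), v) = decide (v ∈ X) := congrFun hb ⟨v, hv⟩
  refine ⟨(c, b), fun h => hc ?_, fun h => hc ?_, fun x hx => ⟨(hT x ?_).symm, ?_⟩,
    fun y hy hadj => ?_⟩
  · exact mem_image.2 ⟨_, mem_union_left _ h, rfl⟩
  · exact mem_image.2 ⟨_, mem_union_right _ h, rfl⟩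
  · exact hXYT (mem_union_left _ hx)
  · simpa [hx] using hpattern x (hXYT (mem_union_left _ hx))
  · have := hpattern y (hXYT (mem_union_right _ hy))
    simp [disjoint_right.1 hXY hy, hadj.2] at this

theorem card_filter_not_surjective_neighborPattern_mul_le {α β : Type*} [Fintype α]
    [DecidableEq α] [Fintype β] [DecidableEq β] {c : α} {T : Finset (α × β)}
    (hT : ∀ v ∈ T, v.1 ≠ c) :
    #{f | ¬ Function.Surjective (neighborPattern f c T)} * 2 ^ (Fintype.card β * #T)
      ≤ 2 ^ #T * (2 ^ #T - 1) ^ Fintype.card β * 2 ^ Fintype.card (Sym2 (α × β)) := by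
  let e : β × T ↪ Sym2 (α × β) :=
    ⟨fun p => s((c, p.1), p.2), by
      rintro ⟨b, v⟩ ⟨b', v'⟩ h
      rcases Sym2.eq_iff.1 h with ⟨h₁, h₂⟩ | ⟨h₁, -⟩
      · simp_all
      · exact absurd (congrArg Prod.fst h₁) (hT _ v'.2).symm⟩
  have hcount := card_filter_comp_embedding_mul e (β := Bool)
    (fun g => ¬ Function.Surjective (Function.curry g))
  simp only [Fintype.card_bool, Fintype.card_prod, Fintype.card_coe] at hcount
  have hcurry : #{g : β × T → Bool | ¬ Function.Surjective (Function.curry g)}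
      = #{h : β → T → Bool | ¬ Function.Surjective h} := by
    rw [← Fintype.card_subtype, ← Fintype.card_subtype]
    exact Fintype.card_congr ((Equiv.curry _ _ _).subtypeEquiv fun _ => Iff.rfl)
  calc _ = _ := hcount
    _ ≤ _ := by
      gcongr
      rw [hcurry]
      simpa using card_filter_not_surjective_le (κ := β) (δ := T → Bool)

theorem exists_forall_surjective_neighborPattern {α β : Type*} [Fintype α] [DecidableEq α]
    [Fintype β] [DecidableEq β] (m : ℕ)
    (h : Fintype.card α * (Fintype.card α * Fintype.card β) ^ m * 2 ^ m
      * (2 ^ m - 1) ^ Fintype.card β < 2 ^ (Fintype.card β * m)) :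
    ∃ f : Sym2 (α × β) → Bool, ∀ c (T : Finset (α × β)), #T = m → (∀ v ∈ T, v.1 ≠ c) →
      Function.Surjective (neighborPattern f c T) := by
  let tests : Finset (α × Finset (α × β)) :=
    {p ∈ univ ×ˢ powersetCard m univ | ∀ v ∈ p.2, v.1 ≠ p.1}
  have htests : tests.card ≤ Fintype.card α * (Fintype.card α * Fintype.card β) ^ m :=
    calc tests.card ≤ #(univ ×ˢ powersetCard m (univ : Finset (α × β))) := card_filter_le _ _
      _ ≤ _ := by
        rw [card_product, card_powersetCard, card_univ, card_univ, Fintype.card_prod]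
        gcongr
        exact Nat.choose_le_pow _ _
  have hbad : ∑ p ∈ tests, #{f | ¬ Function.Surjective (neighborPattern f p.1 p.2)}
      < Fintype.card (Sym2 (α × β) → Bool) := by
    rw [Fintype.card_fun, Fintype.card_bool]
    refine Nat.lt_of_mul_lt_mul_right (a := 2 ^ (Fintype.card β * m)) ?_
    calc _ = ∑ p ∈ tests, #{f | ¬ Function.Surjective (neighborPattern f p.1 p.2)}
          * 2 ^ (Fintype.card β * m) := sum_mul _ _ _
      _ ≤ ∑ p ∈ tests, 2 ^ m * (2 ^ m - 1) ^ Fintype.card β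
          * 2 ^ Fintype.card (Sym2 (α × β)) := by
        refine sum_le_sum fun p hp => ?_
        obtain ⟨hp, havoid⟩ := mem_filter.1 hp
        have hm : #p.2 = m := (mem_powersetCard.1 (mem_product.1 hp).2).2
        simpa only [hm] using card_filter_not_surjective_neighborPattern_mul_le havoid
      _ ≤ Fintype.card α * (Fintype.card α * Fintype.card β) ^ m * 2 ^ m
            * (2 ^ m - 1) ^ Fintype.card β * 2 ^ Fintype.card (Sym2 (α × β)) := by
        rw [sum_const, smul_eq_mul, ← mul_assoc, ← mul_assoc]
        gcongr
      _ < 2 ^ (Fintype.card β * m) * 2 ^ Fintype.card (Sym2 (α × β)) := by gcongr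
      _ = _ := mul_comm _ _
  obtain ⟨f, hf⟩ := exists_forall_notMem_of_sum_card_lt hbad
  refine ⟨f, fun c T hT hTc => ?_⟩
  simpa using hf (c, T)
    (mem_filter.2 ⟨mem_product.2 ⟨mem_univ _, mem_powersetCard.2 ⟨subset_univ _, hT⟩⟩, hTc⟩)

theorem exists_partiteGraph_hasExtensionProperty (k : ℕ) :
    ∃ (N : ℕ) (f : Sym2 (Fin k × Fin N) → Bool), HasExtensionProperty (partiteGraph f) k := by
  set m := k - 1
  obtain ⟨N, hN, hN₁⟩ := ((eventually_mul_pow_mul_pow_lt (k ^ (m + 1) * 2 ^ m) m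
    (Nat.sub_one_lt (pow_ne_zero m two_ne_zero))).and (Filter.eventually_ge_atTop 1)).exists
  have : Nonempty (Fin N) := ⟨⟨0, hN₁⟩⟩
  obtain ⟨f, hf⟩ := exists_forall_surjective_neighborPattern (α := Fin k) (β := Fin N) m <| by
    rw [Fintype.card_fin, Fintype.card_fin, mul_comm N m, pow_mul]
    convert hN using 1
    ring
  exact ⟨N, f, by simpa using hasExtensionProperty_partiteGraph f (by simpa using hf)⟩

theorem exists_cliqueFree_graph_with_extension_property
    (ℓ : ℕ) (hℓ : 2 ≤ ℓ) :
    ∃ (n : ℕ) (H : SimpleGraph (Fin n)),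
      H.CliqueFree ℓ ∧ HasExtensionProperty H (ℓ - 1) := by
  obtain ⟨N, f, hext⟩ := exists_partiteGraph_hasExtensionProperty (ℓ - 1)
  let φ := SimpleGraph.Iso.map finProdFinEquiv (partiteGraph f)
  refine ⟨_, _, ?_, hext.of_iso φ⟩
  have hfree := partiteGraph_cliqueFree f
  rw [Fintype.card_fin, Nat.sub_add_cancel (by omega)] at hfree
  exact hfree.comap φ.symm.isContained
end

section
/- Let F be a finite simple graph with ℓ ≥ 2 vertices and let k = ⌊ℓ/2 − 2·log₂ℓ + 3⌋. Then there exists a finite simple graph H that has the (k−1)-extension property and contains no induced copy of F. (Equivalently, the extension index of F is at least ⌊ℓ/2 − 2·log₂ℓ + 3⌋.) -/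
open Finset Real
open scoped Classical

namespace ExtensionIndex

-- In probability terms: if `P f` forces `Q` on the coordinates picked out by `ι`,
-- then `Pr[P] ≤ Pr[Q]`.
theorem natCard_mul_two_pow_le_of_comp {α β : Type*} [Fintype α] [Fintype β]
    (ι : β ↪ α) {P : (α → Bool) → Prop} {Q : (β → Bool) → Prop}
    (hPQ : ∀ f, P f → Q (f ∘ ι)) :
    Nat.card {f // P f} * 2 ^ Nat.card β ≤ Nat.card {g // Q g} * 2 ^ Nat.card α := by
  let restrict : {f // P f} → {g // Q g} × ({a // a ∉ Set.range ι} → Bool) :=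
    fun f => (⟨f.1 ∘ ι, hPQ f.1 f.2⟩, fun a => f.1 a)
  have hinj : Function.Injective restrict := by
    rintro ⟨f₁, _⟩ ⟨f₂, _⟩ h
    simp only [restrict, Prod.mk.injEq, Subtype.mk.injEq] at h
    ext1; funext a
    by_cases ha : a ∈ Set.range ι
    · obtain ⟨b, rfl⟩ := ha
      exact congrFun h.1 b
    · exact congrFun h.2 ⟨a, ha⟩
  have hcompl : Nat.card {a // a ∉ Set.range ι} + Nat.card β = Nat.card α := by
    simp only [Nat.card_eq_fintype_card]
    rw [Fintype.card_subtype_compl, Fintype.card_range]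
    have := Fintype.card_le_of_embedding ι
    omega
  calc Nat.card {f // P f} * 2 ^ Nat.card β
      ≤ Nat.card {g // Q g} * 2 ^ Nat.card {a // a ∉ Set.range ι} * 2 ^ Nat.card β := by
        gcongr
        simpa [Nat.card_fun] using Nat.card_le_card_of_injective restrict hinj
    _ = Nat.card {g // Q g} * 2 ^ Nat.card α := by
        rw [mul_assoc, ← pow_add, hcompl]

lemma natCard_forall_row_ne {γ δ : Type*} [Fintype γ] [Fintype δ] (p : δ → Bool) :
    Nat.card {g : γ × δ → Bool // ∀ z, (fun w => g (z, w)) ≠ p} =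
      (2 ^ Nat.card δ - 1) ^ Nat.card γ := by
  let e : {g : γ × δ → Bool // ∀ z, (fun w => g (z, w)) ≠ p} ≃ (γ → {h : δ → Bool // h ≠ p}) :=
    (Equiv.subtypeEquiv (q := fun c => ∀ z, c z ≠ p) (Equiv.curry _ _ _) fun _ => Iff.rfl).trans
      (Equiv.subtypePiEquivPi (p := fun _ h => h ≠ p))
  rw [Nat.card_congr e, Nat.card_pi, prod_const, card_univ]
  simp only [Nat.card_eq_fintype_card, Fintype.card_subtype_compl, Fintype.card_subtype_eq,
    Fintype.card_fun, Fintype.card_bool]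

lemma cast_le_one_sub_inv_two_pow_pow_mul {A s t e : ℕ}
    (h : A * 2 ^ (t * s) ≤ (2 ^ s - 1) ^ t * 2 ^ e) :
    (A : ℝ) ≤ (1 - (2 ^ s)⁻¹) ^ t * 2 ^ e := by
  have hR : (A : ℝ) * 2 ^ (t * s) ≤ (2 ^ s - 1) ^ t * 2 ^ e := by
    have := Nat.cast_le (α := ℝ).mpr h
    push_cast [Nat.cast_sub Nat.one_le_two_pow] at this
    exact this
  have hfrac : ((1 : ℝ) - (2 ^ s)⁻¹) ^ t = (2 ^ s - 1) ^ t / 2 ^ (t * s) := by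
    rw [mul_comm, pow_mul, ← div_pow]
    field_simp
  rwa [hfrac, div_mul_eq_mul_div, le_div_iff₀ (by positivity)]

variable {V : Type}

-- The values on the diagonal are ignored, so a uniform `f` gives the uniform random graph.
def graphOf (f : Sym2 V → Bool) : SimpleGraph V := SimpleGraph.fromEdgeSet {e | f e}

lemma graphOf_adj {f : Sym2 V → Bool} {a b : V} : (graphOf f).Adj a b ↔ f s(a, b) ∧ a ≠ b :=
  SimpleGraph.fromEdgeSet_adj _

def HasExtension (G : SimpleGraph V) (X Y : Finset V) : Prop :=
  ∃ z : V, z ∉ X ∧ z ∉ Y ∧ (∀ x ∈ X, G.Adj z x) ∧ ∀ y ∈ Y, ¬ G.Adj z y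

lemma exists_not_hasExtension [DecidableEq V] {G : SimpleGraph V} {m : ℕ}
    (h : ¬ HasExtensionProperty G m) :
    ∃ s < m, ∃ S : Finset V, #S = s ∧ ∃ X ⊆ S, ¬ HasExtension G X (S \ X) := by
  simp only [HasExtensionProperty, not_forall] at h
  obtain ⟨X, Y, hXY, hlt, hX⟩ := h
  refine ⟨#(X ∪ Y), by rwa [card_union_of_disjoint hXY], X ∪ Y, rfl, X, subset_union_left, ?_⟩
  rwa [union_sdiff_cancel_left hXY]

lemma hasExtensionProperty_of_le_one [Nonempty V] (G : SimpleGraph V) {k : ℕ} (hk : k ≤ 1) :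
    HasExtensionProperty G k := by
  intro X Y _ hXY
  obtain ⟨z⟩ := ‹Nonempty V›
  obtain rfl : X = ∅ := card_eq_zero.mp (by omega)
  obtain rfl : Y = ∅ := card_eq_zero.mp (by omega)
  exact ⟨z, by simp⟩

theorem natCard_not_hasExtension_le [Fintype V] {X Y : Finset V} (hXY : Disjoint X Y) :
    (Nat.card {f : Sym2 V → Bool // ¬ HasExtension (graphOf f) X Y} : ℝ) ≤
      (1 - (2 ^ (#X + #Y))⁻¹) ^ (Nat.card V - (#X + #Y)) * 2 ^ Nat.card (Sym2 V) := by
  set S := X ∪ Y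
  have hS : #S = #X + #Y := card_union_of_disjoint hXY
  have hne : ∀ z ∉ S, ∀ w ∈ S, z ≠ w := fun z hz w hw h => hz (h ▸ hw)
  let ι : {z // z ∉ S} × {w // w ∈ S} ↪ Sym2 V :=
    ⟨fun p => s(p.1.1, p.2.1), by
      rintro ⟨z, w⟩ ⟨z', w'⟩ h
      rcases Sym2.eq_iff.mp h with ⟨h₁, h₂⟩ | ⟨h₁, -⟩
      · exact Prod.ext (Subtype.ext h₁) (Subtype.ext h₂)
      · exact absurd (h₁ ▸ w'.2) z.2⟩
  -- Failure forces every vertex outside `S` to see on `S` a pattern other than `X`.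
  let pattern : {w // w ∈ S} → Bool := fun w => decide (w.1 ∈ X)
  let Q : ({z // z ∉ S} × {w // w ∈ S} → Bool) → Prop :=
    fun g => ∀ z, (fun w => g (z, w)) ≠ pattern
  have hPQ : ∀ f : Sym2 V → Bool, ¬ HasExtension (graphOf f) X Y → Q (f ∘ ι) := by
    intro f hf z hz
    have hz' : ∀ w : {w // w ∈ S}, f s(z.1, w.1) = decide (w.1 ∈ X) := congrFun hz
    refine hf ⟨z.1, fun hX => z.2 (mem_union_left _ hX), fun hY => z.2 (mem_union_right _ hY),
      fun x hx => graphOf_adj.mpr ⟨?_, hne z.1 z.2 x (mem_union_left _ hx)⟩,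
      fun y hy hadj => ?_⟩
    · simpa [hx] using hz' ⟨x, mem_union_left _ hx⟩
    · simpa [disjoint_right.mp hXY hy, (graphOf_adj.mp hadj).1] using hz' ⟨y, mem_union_right _ hy⟩
  have hcount := natCard_mul_two_pow_le_of_comp ι hPQ
  have hcompl : Nat.card {z // z ∉ S} = Nat.card V - #S := by
    simp only [Nat.card_eq_fintype_card, Fintype.card_subtype_compl, Fintype.card_coe]
  have hS' : Nat.card S = #S := by rw [Nat.card_eq_fintype_card, Fintype.card_coe]
  rw [natCard_forall_row_ne, Nat.card_prod, hcompl, hS'] at hcount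
  rw [← hS]
  exact cast_le_one_sub_inv_two_pow_pow_mul hcount

lemma one_sub_inv_two_pow_pow_le {s m n : ℕ} (hs : s < m) :
    (1 - (2 ^ s)⁻¹ : ℝ) ^ (n - s) ≤ (1 - (2 ^ (m - 1))⁻¹) ^ (n - m) := by
  have h₁ : (2 ^ s : ℝ)⁻¹ ≤ 1 := inv_le_one_of_one_le₀ (one_le_pow₀ one_le_two)
  have h₂ : (2 ^ (m - 1) : ℝ)⁻¹ ≤ (2 ^ s)⁻¹ :=
    inv_anti₀ (by positivity) (pow_le_pow_right₀ one_le_two (by omega))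
  calc (1 - (2 ^ s)⁻¹ : ℝ) ^ (n - s) ≤ (1 - (2 ^ (m - 1))⁻¹) ^ (n - s) := by
        gcongr
    _ ≤ (1 - (2 ^ (m - 1))⁻¹) ^ (n - m) :=
        pow_le_pow_of_le_one (by linarith)
          (by linarith [inv_pos.mpr (pow_pos (two_pos (α := ℝ)) (m - 1))]) (by omega)

lemma sum_choose_mul_two_pow_lt {n : ℕ} (hn : 1 ≤ n) (m : ℕ) :
    ∑ s ∈ range m, n.choose s * 2 ^ s < (2 * n) ^ m :=
  calc ∑ s ∈ range m, n.choose s * 2 ^ s ≤ ∑ s ∈ range m, (2 * n) ^ s := by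
        gcongr with s
        rw [mul_pow, mul_comm]
        exact Nat.mul_le_mul_left _ (Nat.choose_le_pow n s)
    _ < (2 * n) ^ m := Nat.geomSum_lt (by omega) fun _ => mem_range.mp

lemma card_not_hasExtensionProperty_le_sum [Fintype V] [DecidableEq V] (m : ℕ) :
    #{f : Sym2 V → Bool | ¬ HasExtensionProperty (graphOf f) m} ≤
      ∑ s ∈ range m, ∑ S ∈ powersetCard s univ, ∑ X ∈ S.powerset,
        #{f : Sym2 V → Bool | ¬ HasExtension (graphOf f) X (S \ X)} := by
  have hcover : ({f : Sym2 V → Bool | ¬ HasExtensionProperty (graphOf f) m} : Finset _) ⊆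
      (range m).biUnion fun s => (powersetCard s univ).biUnion fun S => S.powerset.biUnion
        fun X => {f | ¬ HasExtension (graphOf f) X (S \ X)} := by
    intro f hf
    obtain ⟨s, hs, S, hS, X, hXS, hX⟩ := exists_not_hasExtension (mem_filter.mp hf).2
    simp only [mem_biUnion, mem_range, mem_powersetCard, mem_powerset, mem_filter, mem_univ,
      true_and]
    exact ⟨s, hs, S, ⟨subset_univ _, hS⟩, X, hXS, hX⟩
  exact (card_le_card hcover).trans <| card_biUnion_le.trans <| sum_le_sum fun _ _ =>
    card_biUnion_le.trans <| sum_le_sum fun _ _ => card_biUnion_le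

theorem card_not_hasExtensionProperty_le [Fintype V] [DecidableEq V] [Nonempty V] (m : ℕ) :
    (#{f : Sym2 V → Bool | ¬ HasExtensionProperty (graphOf f) m} : ℝ) ≤
      (2 * Nat.card V) ^ m * ((1 - (2 ^ (m - 1))⁻¹) ^ (Nat.card V - m) *
        2 ^ Nat.card (Sym2 V)) := by
  set B : ℝ := (1 - (2 ^ (m - 1))⁻¹) ^ (Nat.card V - m) * 2 ^ Nat.card (Sym2 V)
  have hB : 0 ≤ B := mul_nonneg (pow_nonneg (sub_nonneg.mpr
    (inv_le_one_of_one_le₀ (one_le_pow₀ one_le_two))) _) (by positivity)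
  calc (#{f : Sym2 V → Bool | ¬ HasExtensionProperty (graphOf f) m} : ℝ)
      ≤ ∑ s ∈ range m, ∑ S ∈ powersetCard s univ, ∑ X ∈ S.powerset,
          (#{f : Sym2 V → Bool | ¬ HasExtension (graphOf f) X (S \ X)} : ℝ) := by
        exact_mod_cast card_not_hasExtensionProperty_le_sum m
    _ ≤ ∑ s ∈ range m, ∑ S ∈ powersetCard s (univ : Finset V), ∑ X ∈ S.powerset, B := by
        gcongr with s hs S hS X hX
        rw [mem_powersetCard] at hS
        rw [mem_powerset] at hX
        have hcard : #X + #(S \ X) < m := by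
          rw [← card_union_of_disjoint disjoint_sdiff, union_sdiff_of_subset hX, hS.2]
          exact mem_range.mp hs
        rw [← Fintype.card_subtype, ← Nat.card_eq_fintype_card]
        exact (natCard_not_hasExtension_le disjoint_sdiff).trans
          (mul_le_mul_of_nonneg_right (one_sub_inv_two_pow_pow_le hcard) (by positivity))
    _ = ((∑ s ∈ range m, (Nat.card V).choose s * 2 ^ s : ℕ) : ℝ) * B := by
        push_cast
        rw [sum_mul]
        refine sum_congr rfl fun s _ => ?_
        rw [sum_congr rfl fun S hS => by rw [sum_const, card_powerset, (mem_powersetCard.mp hS).2],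
          sum_const, card_powersetCard, card_univ, Nat.card_eq_fintype_card, nsmul_eq_mul,
          nsmul_eq_mul]
        push_cast
        ring
    _ ≤ (2 * Nat.card V) ^ m * B := by
        refine mul_le_mul_of_nonneg_right ?_ hB
        exact_mod_cast (sum_choose_mul_two_pow_lt Nat.card_pos m).le

theorem natCard_embeds_along_le [Fintype V] {W : Type*} [Fintype W] (F : SimpleGraph W)
    (φ : W ↪ V) :
    Nat.card {f : Sym2 V → Bool // ∀ a b, F.Adj a b ↔ (graphOf f).Adj (φ a) (φ b)} *
      2 ^ (Nat.card W).choose 2 ≤ 2 ^ Nat.card (Sym2 V) := by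
  let ι : {e : Sym2 W // ¬ e.IsDiag} ↪ Sym2 V :=
    ⟨fun e => e.1.map φ, fun e₁ e₂ h => Subtype.ext (Sym2.map.injective φ.injective h)⟩
  have hPQ : ∀ f : Sym2 V → Bool, (∀ a b, F.Adj a b ↔ (graphOf f).Adj (φ a) (φ b)) →
      f ∘ ι = fun e => decide (e.1 ∈ F.edgeSet) := by
    intro f hf
    funext ⟨e, he⟩
    induction e using Sym2.inductionOn with
    | hf a b =>
      have hab : φ a ≠ φ b := φ.injective.ne (by simpa using he)
      change f (s(a, b).map φ) = decide (s(a, b) ∈ F.edgeSet)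
      simp [hf a b, graphOf_adj, hab]
  have := natCard_mul_two_pow_le_of_comp ι (Q := fun g => g = _) hPQ
  simpa only [Nat.card_eq_fintype_card, Fintype.card_subtype_eq, one_mul,
    Sym2.card_subtype_not_diag] using this

theorem card_nonempty_embedding_le [Fintype V] [DecidableEq V] {W : Type*} [Fintype W]
    (F : SimpleGraph W) :
    #{f : Sym2 V → Bool | Nonempty (F ↪g graphOf f)} * 2 ^ (Nat.card W).choose 2 ≤
      (Nat.card V).descFactorial (Nat.card W) * 2 ^ Nat.card (Sym2 V) := by
  have hcover : ({f : Sym2 V → Bool | Nonempty (F ↪g graphOf f)} : Finset _) ⊆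
      (univ : Finset (W ↪ V)).biUnion fun φ =>
        {f | ∀ a b, F.Adj a b ↔ (graphOf f).Adj (φ a) (φ b)} := by
    intro f hf
    obtain ⟨ψ⟩ := (mem_filter.mp hf).2
    exact mem_biUnion.mpr ⟨ψ.toEmbedding, mem_univ _, mem_filter.mpr
      ⟨mem_univ _, fun a b => ψ.map_rel_iff.symm⟩⟩
  calc #{f : Sym2 V → Bool | Nonempty (F ↪g graphOf f)} * 2 ^ (Nat.card W).choose 2
      ≤ ∑ φ : W ↪ V, #{f : Sym2 V → Bool | ∀ a b, F.Adj a b ↔ (graphOf f).Adj (φ a) (φ b)} *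
          2 ^ (Nat.card W).choose 2 := by
        rw [← sum_mul]
        gcongr
        exact (card_le_card hcover).trans card_biUnion_le
    _ ≤ ∑ _φ : W ↪ V, 2 ^ Nat.card (Sym2 V) := by
        gcongr with φ
        rw [← Fintype.card_subtype, ← Nat.card_eq_fintype_card]
        exact natCard_embeds_along_le F φ
    _ = (Nat.card V).descFactorial (Nat.card W) * 2 ^ Nat.card (Sym2 V) := by
        simp only [sum_const, card_univ, Fintype.card_embedding_eq, smul_eq_mul,
          Nat.card_eq_fintype_card]

lemma mul_descFactorial_le (n : ℕ) {ℓ : ℕ} (hℓ : 2 ≤ ℓ) :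
    n * n.descFactorial ℓ ≤ (n - 1) * n ^ ℓ := by
  obtain ⟨k, rfl⟩ : ∃ k, ℓ = k + 1 := ⟨ℓ - 1, by omega⟩
  rw [Nat.descFactorial_succ, pow_succ]
  calc n * ((n - k) * n.descFactorial k) ≤ n * ((n - 1) * n ^ k) := by
        gcongr
        · omega
        · exact Nat.descFactorial_le_pow n k
    _ = (n - 1) * (n ^ k * n) := by ring

lemma two_pow_pow_le_two_pow_choose (ℓ : ℕ) : (2 ^ ((ℓ - 1) / 2)) ^ ℓ ≤ 2 ^ ℓ.choose 2 := by
  rw [← pow_mul]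
  refine Nat.pow_le_pow_right two_pos ?_
  rw [Nat.choose_two_right, Nat.le_div_iff_mul_le two_pos]
  calc (ℓ - 1) / 2 * ℓ * 2 = (ℓ - 1) / 2 * 2 * ℓ := by ring
    _ ≤ (ℓ - 1) * ℓ := Nat.mul_le_mul_right ℓ (Nat.div_mul_le_self _ 2)
    _ = ℓ * (ℓ - 1) := mul_comm _ _

lemma sixteen_le_of_two_mul_logb_le {ℓ : ℕ} (hℓ : 2 ≤ ℓ) (h : 2 * logb 2 ℓ ≤ ℓ / 2) :
    16 ≤ ℓ := by
  by_contra! hlt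
  have hpow : 2 ^ ℓ < ℓ ^ 4 := by interval_cases ℓ <;> norm_num
  have hlog : logb 2 ((2 : ℝ) ^ ℓ) < logb 2 ((ℓ : ℝ) ^ 4) :=
    logb_lt_logb one_lt_two (by positivity) (by exact_mod_cast hpow)
  rw [logb_pow, logb_pow, logb_self_eq_one one_lt_two] at hlog
  push_cast at hlog
  linarith

lemma two_pow_mul_one_sub_pow_le_exp (E k : ℕ) {ε : ℝ} (hε : ε ≤ 1) :
    (2 : ℝ) ^ E * (1 - ε) ^ k ≤ exp (E - ε * k) :=
  calc (2 : ℝ) ^ E * (1 - ε) ^ k ≤ exp 1 ^ E * exp (-ε) ^ k := by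
        gcongr
        · linarith [add_one_le_exp 1]
        · linarith [add_one_le_exp (-ε)]
    _ = exp (E - ε * k) := by
        rw [← exp_nat_mul, ← exp_nat_mul, ← exp_add]
        ring_nf

lemma sq_div_four_le_inv_two_pow_mul_two_pow {ℓ m h : ℕ} (hℓ : 0 < ℓ) (hm : 1 ≤ m)
    (hh : (ℓ : ℝ) ≤ 2 * h + 2) (hmℓ : (m : ℝ) ≤ ℓ / 2 - 2 * logb 2 ℓ + 2) :
    (ℓ : ℝ) ^ 2 / 4 ≤ (2 ^ (m - 1))⁻¹ * 2 ^ h := by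
  have hℓc : (ℓ : ℝ) ^ 2 = 2 ^ (2 * logb 2 ℓ) := by
    rw [mul_comm, rpow_mul zero_le_two, rpow_logb two_pos (by norm_num) (by positivity)]
    norm_cast
  have key : (2 : ℝ) ^ (2 * logb 2 ℓ) * 2 ^ (m - 1) ≤ 2 ^ h * 4 := by
    rw [← rpow_natCast 2 (m - 1), ← rpow_add two_pos,
      show (2 : ℝ) ^ h * 4 = 2 ^ ((h : ℝ) + 2) by rw [rpow_add two_pos, rpow_natCast]; norm_num]
    apply rpow_le_rpow_of_exponent_le one_le_two
    push_cast [Nat.cast_sub hm]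
    linarith
  rw [hℓc, inv_mul_eq_div, div_le_div_iff₀ (by norm_num) (by positivity)]
  exact key

lemma mul_pow_mul_one_sub_pow_lt_one {ℓ m n : ℕ} (hℓ : 16 ≤ ℓ) (hm : 1 ≤ m)
    (hmℓ : (m : ℝ) ≤ ℓ / 2 - 2 * logb 2 ℓ + 2) (hn : n = 2 ^ ((ℓ - 1) / 2)) :
    (n : ℝ) * (2 * n) ^ m * (1 - (2 ^ (m - 1))⁻¹) ^ (n - m) < 1 := by
  set h := (ℓ - 1) / 2
  set ε : ℝ := (2 ^ (m - 1))⁻¹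
  have hℓR : (16 : ℝ) ≤ ℓ := by exact_mod_cast hℓ
  have hc : 4 ≤ logb 2 ℓ := by
    rw [le_logb_iff_rpow_le one_lt_two (by positivity)]
    norm_num [hℓR]
  have hh₁ : (ℓ : ℝ) ≤ 2 * h + 2 := by exact_mod_cast (by omega : ℓ ≤ 2 * h + 2)
  have hh₂ : 2 * (h : ℝ) + 1 ≤ ℓ := by exact_mod_cast (by omega : 2 * h + 1 ≤ ℓ)
  have hmn : m ≤ n := by
    have : m ≤ h := by exact_mod_cast (show (m : ℝ) ≤ h by linarith)
    exact hn ▸ this.trans Nat.lt_two_pow_self.le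
  have hεn : (ℓ : ℝ) ^ 2 / 4 ≤ ε * n := by
    rw [hn, Nat.cast_pow, Nat.cast_two]
    exact sq_div_four_le_inv_two_pow_mul_two_pow (by omega) hm hh₁ hmℓ
  have hεm : ε * m < 2 := by
    have : (m : ℝ) < 2 * 2 ^ (m - 1) := by
      rw [← pow_succ', Nat.sub_add_cancel hm]
      exact_mod_cast Nat.lt_two_pow_self
    rw [inv_mul_eq_div, div_lt_iff₀ (by positivity)]
    linarith
  -- `ε (n - m) > ℓ²/4 - 2`, while `m ≤ ℓ/2 - 6` (as `log₂ ℓ ≥ 4`) bounds the exponent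
  -- by `(ℓ² - 9ℓ - 14)/4`.
  have hE : (h + (h + 1) * m : ℝ) < ε * (n - m : ℕ) := by
    have hm0 : (0 : ℝ) ≤ m := by positivity
    rw [Nat.cast_sub hmn, mul_sub]
    nlinarith
  have hpow : (n : ℝ) * (2 * n) ^ m = 2 ^ (h + (h + 1) * m) := by
    rw [hn, pow_add, pow_mul, pow_succ']
    push_cast
    ring
  calc (n : ℝ) * (2 * n) ^ m * (1 - ε) ^ (n - m)
      ≤ exp ((h + (h + 1) * m : ℕ) - ε * (n - m : ℕ)) := by
        rw [hpow]
        exact two_pow_mul_one_sub_pow_le_exp _ _ (inv_le_one_of_one_le₀ (one_le_pow₀ one_le_two))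
    _ < 1 := by
        rw [exp_lt_one_iff]
        push_cast
        linarith

theorem mul_card_not_hasExtensionProperty_lt {ℓ m n : ℕ} (hℓ : 16 ≤ ℓ) (hm : 1 ≤ m)
    (hmℓ : (m : ℝ) ≤ ℓ / 2 - 2 * logb 2 ℓ + 2) (hn : n = 2 ^ ((ℓ - 1) / 2)) :
    n * #{f : Sym2 (Fin n) → Bool | ¬ HasExtensionProperty (graphOf f) m} <
      2 ^ Nat.card (Sym2 (Fin n)) := by
  have : NeZero n := ⟨by rw [hn]; positivity⟩
  have hbound := card_not_hasExtensionProperty_le (V := Fin n) m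
  rw [Nat.card_fin] at hbound
  have hnum := mul_pow_mul_one_sub_pow_lt_one hℓ hm hmℓ hn
  have : (n * #{f : Sym2 (Fin n) → Bool | ¬ HasExtensionProperty (graphOf f) m} : ℝ) <
      2 ^ Nat.card (Sym2 (Fin n)) :=
    calc (n * #{f : Sym2 (Fin n) → Bool | ¬ HasExtensionProperty (graphOf f) m} : ℝ)
        ≤ n * ((2 * n) ^ m * ((1 - (2 ^ (m - 1))⁻¹) ^ (n - m) *
            2 ^ Nat.card (Sym2 (Fin n)))) := by gcongr
      _ = n * (2 * n) ^ m * (1 - (2 ^ (m - 1))⁻¹) ^ (n - m) * 2 ^ Nat.card (Sym2 (Fin n)) := by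
          ring
      _ < 2 ^ Nat.card (Sym2 (Fin n)) := mul_lt_of_lt_one_left (by positivity) hnum
  exact_mod_cast this

theorem mul_card_nonempty_embedding_le {W : Type*} [Fintype W] (F : SimpleGraph W) {ℓ n : ℕ}
    (hW : Nat.card W = ℓ) (hℓ : 2 ≤ ℓ) (hn : n = 2 ^ ((ℓ - 1) / 2)) :
    n * #{f : Sym2 (Fin n) → Bool | Nonempty (F ↪g graphOf f)} ≤
      (n - 1) * 2 ^ Nat.card (Sym2 (Fin n)) := by
  have hbound := card_nonempty_embedding_le (V := Fin n) F
  rw [hW, Nat.card_fin] at hbound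
  refine Nat.le_of_mul_le_mul_right ?_ (pow_pos two_pos (ℓ.choose 2))
  calc n * #{f : Sym2 (Fin n) → Bool | Nonempty (F ↪g graphOf f)} * 2 ^ ℓ.choose 2
      ≤ n * n.descFactorial ℓ * 2 ^ Nat.card (Sym2 (Fin n)) := by
        rw [mul_assoc, mul_assoc]
        exact Nat.mul_le_mul_left n hbound
    _ ≤ (n - 1) * n ^ ℓ * 2 ^ Nat.card (Sym2 (Fin n)) :=
        Nat.mul_le_mul_right _ (mul_descFactorial_le n hℓ)
    _ ≤ (n - 1) * 2 ^ ℓ.choose 2 * 2 ^ Nat.card (Sym2 (Fin n)) :=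
        Nat.mul_le_mul_right _ (Nat.mul_le_mul_left _ (hn ▸ two_pow_pow_le_two_pow_choose ℓ))
    _ = (n - 1) * 2 ^ Nat.card (Sym2 (Fin n)) * 2 ^ ℓ.choose 2 := by ring

lemma exists_not_and_not_of_mul_card_lt {α : Type*} [Fintype α] [DecidableEq α]
    {P₁ P₂ : (α → Bool) → Prop} [DecidablePred P₁] [DecidablePred P₂] {n : ℕ} (hn : 1 ≤ n)
    (h₁ : n * #{f | P₁ f} < 2 ^ Nat.card α)
    (h₂ : n * #{f | P₂ f} ≤ (n - 1) * 2 ^ Nat.card α) :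
    ∃ f, ¬ P₁ f ∧ ¬ P₂ f := by
  have hlt : #(({f | P₁ f} : Finset (α → Bool)) ∪ ({f | P₂ f} : Finset (α → Bool))) <
      #(univ : Finset (α → Bool)) := by
    rw [card_univ, Fintype.card_fun, Fintype.card_bool, ← Nat.card_eq_fintype_card]
    refine (card_union_le _ _).trans_lt (Nat.lt_of_mul_lt_mul_left (a := n) ?_)
    calc n * (#{f | P₁ f} + #{f | P₂ f}) < 2 ^ Nat.card α + (n - 1) * 2 ^ Nat.card α := by
          rw [mul_add]
          omega
      _ = n * 2 ^ Nat.card α := by rw [← one_add_mul, Nat.add_sub_cancel' hn]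
  obtain ⟨f, -, hf⟩ := exists_mem_notMem_of_card_lt_card hlt
  simp only [mem_union, mem_filter, mem_univ, true_and, not_or] at hf
  exact ⟨f, hf⟩

theorem exists_hasExtensionProperty_isEmpty_embedding {W : Type*} [Fintype W]
    (F : SimpleGraph W) {ℓ m : ℕ} (hW : Nat.card W = ℓ) (hℓ : 2 ≤ ℓ) (hm : 2 ≤ m)
    (hmℓ : (m : ℝ) ≤ ℓ / 2 - 2 * logb 2 ℓ + 2) :
    ∃ (n : ℕ) (H : SimpleGraph (Fin n)), HasExtensionProperty H m ∧ IsEmpty (F ↪g H) := by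
  have h16 : 16 ≤ ℓ := sixteen_le_of_two_mul_logb_le hℓ (by
    have : (2 : ℝ) ≤ m := by exact_mod_cast hm
    linarith)
  obtain ⟨n, hn⟩ : ∃ n, n = 2 ^ ((ℓ - 1) / 2) := ⟨_, rfl⟩
  obtain ⟨f, hf₁, hf₂⟩ := exists_not_and_not_of_mul_card_lt (hn ▸ Nat.one_le_two_pow)
    (mul_card_not_hasExtensionProperty_lt h16 (by omega) hmℓ hn)
    (mul_card_nonempty_embedding_le F hW hℓ hn)
  exact ⟨n, graphOf f, not_not.mp hf₁, not_nonempty_iff.mp hf₂⟩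

end ExtensionIndex

open ExtensionIndex

/-- Lower bound on the extension index: for every graph `F` on `ℓ ≥ 2` vertices and
`k = ⌊ℓ/2 - 2·log₂ ℓ + 3⌋`, there is a graph `H` with the `(k-1)`-extension property
containing no induced copy of `F`. -/
theorem extension_index_lower_bound
    {V : Type} [Fintype V] (F : SimpleGraph V) (ℓ : ℕ)
    (hV : Fintype.card V = ℓ) (hℓ : 2 ≤ ℓ)
    (k : ℤ) (hk : k = ⌊(ℓ : ℝ) / 2 - 2 * Real.logb 2 ℓ + 3⌋) :
    ∃ (n : ℕ) (H : SimpleGraph (Fin n)),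
      HasExtensionProperty H (k - 1).toNat ∧ IsEmpty (F ↪g H) := by
  obtain hk₁ | hk₁ := le_or_gt (k - 1).toNat 1
  · refine ⟨1, ⊥, hasExtensionProperty_of_le_one ⊥ hk₁, ⟨fun e => ?_⟩⟩
    have := Fintype.card_le_of_embedding e.toEmbedding
    rw [hV, Fintype.card_fin] at this
    omega
  · refine exists_hasExtensionProperty_isEmpty_embedding F (Nat.card_eq_fintype_card.trans hV)
      hℓ hk₁ ?_
    have hfloor : (k : ℝ) ≤ ℓ / 2 - 2 * logb 2 ℓ + 3 := hk ▸ Int.floor_le _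
    have hcast : ((k - 1).toNat : ℝ) = k - 1 := by
      rw [← Int.cast_natCast, Int.toNat_of_nonneg (by omega)]
      push_cast
      ring
    linarith
end

section
/- (Olariu) A finite simple graph H contains no induced copy of the paw graph if and only if every connected component of H is triangle-free or complete multipartite. -/
/-- The paw graph: a triangle `{0, 1, 2}` plus a pendant vertex `3` adjacent to `2`. -/
def pawGraph : SimpleGraph (Fin 4) :=
  SimpleGraph.fromRel (fun a b =>
    (a = 0 ∧ b = 1) ∨ (a = 0 ∧ b = 2) ∨ (a = 1 ∧ b = 2) ∨ (a = 2 ∧ b = 3))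

/-- A graph is complete multipartite if non-adjacency (on distinct vertices) is
transitive. -/
def IsCompleteMultipartiteGraph {V : Type*} (B : SimpleGraph V) : Prop :=
  ∀ u v w : V, u ≠ v → v ≠ w → u ≠ w → ¬ B.Adj u v → ¬ B.Adj v w → ¬ B.Adj u w

/-!
In a paw-free graph a vertex adjacent to a vertex `c` of a triangle `abc` is adjacent to `a` or
`b`. Hence every edge at a vertex of a triangle lies in a triangle, and in a connected paw-free
graph with a triangle every vertex lies on one. Then every edge `uw` dominates the graph:
`N(u) ∪ N(w)` is closed under taking neighbours, by at most three applications of the first fact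
to triangles through `uw` or through an edge at `u` or `w`. So no vertex is non-adjacent to both
ends of an edge, which is complete multipartiteness. Conversely, the paw is connected, contains a
triangle, and its vertex `3` is non-adjacent to both ends of the edge `01`, so it embeds in no
component of either kind.
-/

namespace SimpleGraph

instance : DecidableRel pawGraph.Adj := fun _ _ => by unfold pawGraph; infer_instance

lemma pawGraph_connected : pawGraph.Connected := by
  rw [connected_iff_exists_forall_reachable]
  refine ⟨2, fun i => ?_⟩
  fin_cases i
  all_goals first | rfl | exact Adj.reachable (by decide)

lemma not_cliqueFree_three_pawGraph : ¬ pawGraph.CliqueFree 3 :=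
  fun h => h {0, 1, 2} (by rw [is3Clique_triple_iff]; decide)

lemma not_isCompleteMultipartite_pawGraph : ¬ pawGraph.IsCompleteMultipartite :=
  fun h => h.trans 0 3 1 (by decide) (by decide) (by decide)

variable {V W : Type*} {G : SimpleGraph V} {H : SimpleGraph W}

lemma isCompleteMultipartiteGraph_iff :
    IsCompleteMultipartiteGraph G ↔ G.IsCompleteMultipartite := by
  refine ⟨fun h => ⟨fun u v w huv hvw => ?_⟩, fun h u v w _ _ _ => h.trans u v w⟩
  by_cases hu : u = v
  · exact hu ▸ hvw
  by_cases hw : v = w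
  · exact hw ▸ huv
  by_cases huw : u = w
  · exact huw ▸ G.loopless.irrefl u
  exact h u v w hu hw huw huv hvw

lemma Reachable.of_adj_closed {P : V → Prop} (hP : ∀ ⦃x y⦄, G.Adj x y → P x → P y)
    {u v : V} (huv : G.Reachable u v) (hu : P u) : P v := by
  replace huv := (reachable_iff_reflTransGen u v).1 huv
  induction huv with
  | refl => exact hu
  | tail _ hxy ih => exact hP hxy ih

lemma Connected.exists_forall_mem_supp (hG : G.Connected) (f : G →g H) :
    ∃ c : H.ConnectedComponent, ∀ v, f v ∈ c.supp := by
  obtain ⟨v₀⟩ := hG.nonempty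
  exact ⟨H.connectedComponentMk (f v₀),
    fun v => ConnectedComponent.sound ((hG.preconnected v₀ v).map f).symm⟩

def Embedding.codRestrict (f : G ↪g H) {s : Set W} (hs : ∀ v, f v ∈ s) : G ↪g H.induce s where
  toFun v := ⟨f v, hs v⟩
  inj' _ _ h := f.injective (congrArg Subtype.val h)
  map_rel_iff' := f.map_rel_iff

def PawFree (G : SimpleGraph V) : Prop := IsEmpty (pawGraph ↪g G)

def OnTriangle (G : SimpleGraph V) (x : V) : Prop := ∃ y z, G.Adj x y ∧ G.Adj x z ∧ G.Adj y z

namespace PawFree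

lemma induce (hG : G.PawFree) (s : Set V) : (G.induce s).PawFree :=
  ⟨fun f => hG.false ((Embedding.induce s).comp f)⟩

lemma adj_or_adj (hG : G.PawFree) {a b c d : V} (hab : G.Adj a b) (hac : G.Adj a c)
    (hbc : G.Adj b c) (hcd : G.Adj c d) : G.Adj a d ∨ G.Adj b d := by
  by_contra! ⟨had, hbd⟩
  have hadj : ∀ i j, G.Adj (![a, b, c, d] i) (![a, b, c, d] j) ↔ pawGraph.Adj i j := by
    intro i j
    fin_cases i <;> fin_cases j <;>
      simp +decide [hab, hac, hbc, hcd, had, hbd, hab.symm, hac.symm, hbc.symm, adj_comm _ d]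
  -- No two non-adjacent vertices of the paw have the same neighbourhood.
  have hinj : Function.Injective ![a, b, c, d] := fun i j hij => by
    have hnbhd : ∀ k, pawGraph.Adj i k ↔ pawGraph.Adj j k := fun k => by
      rw [← hadj, ← hadj, hij]
    have hnadj : ¬ pawGraph.Adj i j := by rw [← hadj, hij]; exact G.loopless.irrefl _
    clear hij
    revert i j
    decide
  exact hG.false ⟨⟨_, hinj⟩, hadj _ _⟩

lemma exists_adj_adj_of_onTriangle (hG : G.PawFree) {x y : V} (hx : G.OnTriangle x)
    (hxy : G.Adj x y) : ∃ z, G.Adj x z ∧ G.Adj y z := by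
  obtain ⟨p, q, hxp, hxq, hpq⟩ := hx
  rcases hG.adj_or_adj hpq hxp.symm hxq.symm hxy with hpy | hqy
  · exact ⟨p, hxp, hpy.symm⟩
  · exact ⟨q, hxq, hqy.symm⟩

lemma onTriangle_of_adj (hG : G.PawFree) {x y : V} (hx : G.OnTriangle x) (hxy : G.Adj x y) :
    G.OnTriangle y :=
  let ⟨z, hxz, hyz⟩ := hG.exists_adj_adj_of_onTriangle hx hxy
  ⟨x, z, hxy.symm, hyz, hxz⟩

lemma adj_or_adj_of_adj_of_adj (hG : G.PawFree) {u w x a : V} (hu : G.OnTriangle u)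
    (huw : G.Adj u w) (hux : G.Adj u x) (hxa : G.Adj x a) : G.Adj u a ∨ G.Adj w a := by
  by_cases hxw : G.Adj x w
  · exact hG.adj_or_adj huw hux hxw.symm hxa
  obtain ⟨z, huz, hxz⟩ := hG.exists_adj_adj_of_onTriangle hu hux
  have hzw : G.Adj z w := (hG.adj_or_adj hxz hux.symm huz.symm huw).resolve_left hxw
  rcases hG.adj_or_adj huz hux hxz.symm hxa with hua | hza
  · exact Or.inl hua
  · exact hG.adj_or_adj huw huz hzw.symm hza

lemma adj_or_adj_of_reachable (hG : G.PawFree) {u w a : V} (hu : G.OnTriangle u)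
    (huw : G.Adj u w) (hua : G.Reachable u a) : G.Adj u a ∨ G.Adj w a := by
  refine hua.of_adj_closed (P := fun a => G.Adj u a ∨ G.Adj w a) (fun x y hxy hx => ?_)
    (Or.inr huw.symm)
  rcases hx with hux | hwx
  · exact hG.adj_or_adj_of_adj_of_adj hu huw hux hxy
  · exact (hG.adj_or_adj_of_adj_of_adj (hG.onTriangle_of_adj hu huw) huw.symm hwx hxy).symm

theorem isCompleteMultipartite_of_connected (hG : G.PawFree) (hconn : G.Connected)
    (htri : ¬ G.CliqueFree 3) : G.IsCompleteMultipartite := by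
  classical
  obtain ⟨t, ht⟩ : ∃ t, G.IsNClique 3 t := by
    simpa only [CliqueFree, not_forall, not_not] using htri
  obtain ⟨a, b, c, hab, hac, hbc, -⟩ := is3Clique_iff.1 ht
  by_contra hcm
  obtain ⟨v, w₁, w₂, h⟩ := exists_isPathGraph3Compl_of_not_isCompleteMultipartite hcm
  have hw₁ : G.OnTriangle w₁ :=
    (hconn.preconnected a w₁).of_adj_closed (fun _ _ hxy hx => hG.onTriangle_of_adj hx hxy)
      ⟨b, c, hab, hac, hbc⟩
  rcases hG.adj_or_adj_of_reachable hw₁ h.adj (hconn.preconnected w₁ v) with h₁ | h₂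
  · exact h.not_adj_fst h₁.symm
  · exact h.not_adj_snd h₂.symm

end PawFree

end SimpleGraph

theorem paw_free_iff_components_triangleFree_or_completeMultipartite_general
    {V : Type} (H : SimpleGraph V) :
    IsEmpty (pawGraph ↪g H) ↔
      ∀ c : H.ConnectedComponent,
        (H.induce c.supp).CliqueFree 3 ∨ IsCompleteMultipartiteGraph (H.induce c.supp) := by
  simp_rw [SimpleGraph.isCompleteMultipartiteGraph_iff, or_iff_not_imp_left]
  constructor
  · exact fun hH c => (SimpleGraph.PawFree.induce hH c.supp).isCompleteMultipartite_of_connected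
      c.connected_toSimpleGraph
  · refine fun h => ⟨fun f => ?_⟩
    obtain ⟨c, hc⟩ := SimpleGraph.pawGraph_connected.exists_forall_mem_supp f.toHom
    let f' := f.codRestrict hc
    have htri : ¬ (H.induce c.supp).CliqueFree 3 := fun hfree =>
      SimpleGraph.not_cliqueFree_three_pawGraph (hfree.comap f'.isContained)
    exact SimpleGraph.not_isCompleteMultipartite_pawGraph ((h c htri).comap f')

/-- Olariu's characterization: a graph is paw-free iff each of its connected
components is triangle-free or complete multipartite. -/
theorem paw_free_iff_components_triangleFree_or_completeMultipartite
    {V : Type} [Fintype V] (H : SimpleGraph V) :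
    IsEmpty (pawGraph ↪g H) ↔
      ∀ c : H.ConnectedComponent,
        (H.induce c.supp).CliqueFree 3 ∨ IsCompleteMultipartiteGraph (H.induce c.supp) :=
  paw_free_iff_components_triangleFree_or_completeMultipartite_general H
end

section
/- A finite simple graph G contains an induced copy of the paw graph if and only if there exist vertices v, u, w of G such that: v lies in a triangle of G (there are vertices a, b with v, a, b pairwise adjacent); u is at distance 2 from v (u ≠ v, u is not adjacent to v, and u and v have a common neighbour); and w is adjacent to v but not adjacent to u. -/
namespace SimpleGraph

variable {V : Type} (G : SimpleGraph V)

theorem nonempty_pawEmbedding_of_pendant {x y z p : V}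
    (hxy : G.Adj x y) (hxz : G.Adj x z) (hyz : G.Adj y z) (hzp : G.Adj z p)
    (hxp : ¬ G.Adj x p) (hyp : ¬ G.Adj y p) :
    Nonempty (pawGraph ↪g G) := by
  have hpx : p ≠ x := by rintro rfl; exact hyp hxy.symm
  have hpy : p ≠ y := by rintro rfl; exact hxp hxy
  refine ⟨⟨⟨![x, y, z, p], ?_⟩, ?_⟩⟩
  · intro i j hij
    fin_cases i <;> fin_cases j <;> simp_all
  · intro i j
    change G.Adj (![x, y, z, p] i) (![x, y, z, p] j) ↔ pawGraph.Adj i j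
    fin_cases i <;> fin_cases j <;> simp_all [pawGraph, G.adj_comm]

theorem nonempty_pawEmbedding_of_triangle_of_path {v a b c u : V}
    (hva : G.Adj v a) (hvb : G.Adj v b) (hab : G.Adj a b) (hvc : G.Adj v c) (hcu : G.Adj c u)
    (hvu : ¬ G.Adj v u) (hau : ¬ G.Adj a u) (hbu : ¬ G.Adj b u) :
    Nonempty (pawGraph ↪g G) := by
  by_cases hac : G.Adj a c
  · exact G.nonempty_pawEmbedding_of_pendant hva hvc hac hcu hvu hau
  by_cases hbc : G.Adj b c
  · exact G.nonempty_pawEmbedding_of_pendant hvb hvc hbc hcu hvu hbu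
  exact G.nonempty_pawEmbedding_of_pendant hab hva.symm hvb.symm hvc hac hbc

theorem nonempty_pawEmbedding_of_diamond {u v a b w : V}
    (hua : G.Adj u a) (hub : G.Adj u b) (hva : G.Adj v a) (hvb : G.Adj v b) (hab : G.Adj a b)
    (hvu : ¬ G.Adj v u) (hvw : G.Adj v w) (huw : ¬ G.Adj u w) :
    Nonempty (pawGraph ↪g G) := by
  by_cases haw : G.Adj a w <;> by_cases hbw : G.Adj b w
  · exact G.nonempty_pawEmbedding_of_pendant hvw hva haw.symm hua.symm hvu fun h ↦ huw h.symm
  · exact G.nonempty_pawEmbedding_of_pendant hub hua hab.symm haw huw hbw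
  · exact G.nonempty_pawEmbedding_of_pendant hua hub hab hbw huw haw
  · exact G.nonempty_pawEmbedding_of_pendant hab hva.symm hvb.symm hvw haw hbw

end SimpleGraph

theorem induced_paw_iff_general
    {V : Type} (G : SimpleGraph V) :
    Nonempty (pawGraph ↪g G) ↔
      ∃ v u w : V,
        (∃ a b : V, G.Adj v a ∧ G.Adj v b ∧ G.Adj a b) ∧
        (u ≠ v ∧ ¬ G.Adj u v ∧ ∃ c : V, G.Adj v c ∧ G.Adj c u) ∧
        (G.Adj v w ∧ ¬ G.Adj w u) := by
  constructor
  · rintro ⟨f⟩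
    refine ⟨f 0, f 3, f 1, ⟨f 1, f 2, ?_⟩, ⟨?_, ?_, f 2, ?_⟩, ?_⟩ <;>
      simp only [ne_eq, f.map_adj_iff, f.injective.eq_iff] <;> simp [pawGraph]
  · rintro ⟨v, u, w, ⟨a, b, hva, hvb, hab⟩, ⟨-, huv, c, hvc, hcu⟩, hvw, hwu⟩
    have hvu : ¬ G.Adj v u := fun h ↦ huv h.symm
    by_cases hua : G.Adj u a <;> by_cases hub : G.Adj u b
    · exact G.nonempty_pawEmbedding_of_diamond hua hub hva hvb hab hvu hvw fun h ↦ hwu h.symm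
    · exact G.nonempty_pawEmbedding_of_pendant hvb hva hab.symm hua.symm hvu fun h ↦ hub h.symm
    · exact G.nonempty_pawEmbedding_of_pendant hva hvb hab hub.symm hvu fun h ↦ hua h.symm
    · exact G.nonempty_pawEmbedding_of_triangle_of_path hva hvb hab hvc hcu hvu
        (fun h ↦ hua h.symm) fun h ↦ hub h.symm

/-- A graph contains an induced paw iff there is a vertex `v` in a triangle, a vertex
`u` at distance 2 from `v`, and a vertex `w` adjacent to `v` but not to `u`. -/
theorem induced_paw_iff
    {V : Type} [Fintype V] (G : SimpleGraph V) :
    Nonempty (pawGraph ↪g G) ↔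
      ∃ v u w : V,
        (∃ a b : V, G.Adj v a ∧ G.Adj v b ∧ G.Adj a b) ∧
        (u ≠ v ∧ ¬ G.Adj u v ∧ ∃ c : V, G.Adj v c ∧ G.Adj c u) ∧
        (G.Adj v w ∧ ¬ G.Adj w u) :=
  induced_paw_iff_general G
end

section
/- Every finite simple graph with the 3-extension property contains an induced copy of the paw graph; moreover, the cycle C₄ on 4 vertices has the 2-extension property and contains no induced copy of the paw graph. (Hence the extension index of the paw graph equals 3.) -/
/-!
From any vertex `c` the extension property gives `d ~ c`, then `a ~ c` with `a ≁ d`, then a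
common neighbour `b` of `a` and `c`. If `b ≁ d`, the triangle `abc` with pendant `d` is a paw.
Otherwise `abcd` is a diamond, and a neighbour `e` of `a` outside `N(d)` yields a paw whether it
is adjacent to `b`, to `c`, or to neither. Conversely `C₄` is bipartite, hence triangle-free,
while the paw contains a triangle.
-/

open SimpleGraph

lemma pawGraph_not_cliqueFree_three : ¬ pawGraph.CliqueFree 3 :=
  fun h ↦ h {0, 1, 2} (is3Clique_triple_iff.2 (by simp [pawGraph]))

lemma nonempty_pawGraph_embedding_of_triangle_pendant {V : Type} {G : SimpleGraph V}
    {a b c d : V} (hab : G.Adj a b) (hac : G.Adj a c) (hbc : G.Adj b c) (hcd : G.Adj c d)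
    (had : ¬ G.Adj a d) (hbd : ¬ G.Adj b d) (ha : a ≠ d) (hb : b ≠ d) :
    Nonempty (pawGraph ↪g G) := by
  refine ⟨⟨⟨![a, b, c, d], fun i j hij ↦ ?_⟩, fun {i j} ↦ ?_⟩⟩
  · fin_cases i <;> fin_cases j <;> simp_all [hab.ne, hac.ne, hbc.ne, hcd.ne, eq_comm]
  · change G.Adj (![a, b, c, d] i) (![a, b, c, d] j) ↔ _
    fin_cases i <;> fin_cases j <;> simp_all [G.adj_comm, pawGraph]

lemma isEmpty_pawGraph_embedding_of_cliqueFree_three {V : Type} {G : SimpleGraph V}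
    (hG : G.CliqueFree 3) : IsEmpty (pawGraph ↪g G) :=
  ⟨fun f ↦ pawGraph_not_cliqueFree_three (hG.comap f.isContained)⟩

lemma cycleGraph_four_cliqueFree_three : (cycleGraph 4).CliqueFree 3 :=
  (cycleGraph.bicoloring_of_even 4 (by decide)).colorable.cliqueFree (by norm_num)

lemma cycleGraph_four_hasExtensionProperty_two : HasExtensionProperty (cycleGraph 4) 2 := by
  unfold HasExtensionProperty
  decide

namespace HasExtensionProperty

variable {V : Type} {G : SimpleGraph V} {k : ℕ}

lemma nonempty (h : HasExtensionProperty G k) (hk : 0 < k) : Nonempty V :=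
  let ⟨z, _⟩ := h ∅ ∅ (Finset.disjoint_empty_left _) (by simpa using hk)
  ⟨z⟩

lemma exists_adj (h : HasExtensionProperty G k) (hk : 1 < k) (x : V) : ∃ z, G.Adj z x := by
  obtain ⟨z, -, -, hz, -⟩ := h {x} ∅ (Finset.disjoint_empty_right _) (by simpa using hk)
  exact ⟨z, hz x (Finset.mem_singleton_self x)⟩

lemma exists_adj_adj (h : HasExtensionProperty G k) (hk : 2 < k) (x y : V) :
    ∃ z, G.Adj z x ∧ G.Adj z y := by
  classical
  have hcard : ({x, y} : Finset V).card + (∅ : Finset V).card < k := by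
    simpa using (Finset.card_le_two : ({x, y} : Finset V).card ≤ 2).trans_lt hk
  obtain ⟨z, -, -, hz, -⟩ := h {x, y} ∅ (Finset.disjoint_empty_right _) hcard
  exact ⟨z, hz x (by simp), hz y (by simp)⟩

lemma exists_adj_not_adj (h : HasExtensionProperty G k) (hk : 2 < k) {x y : V} (hxy : x ≠ y) :
    ∃ z, z ≠ y ∧ G.Adj z x ∧ ¬ G.Adj z y := by
  obtain ⟨z, -, hzy, hx, hy⟩ :=
    h {x} {y} (Finset.disjoint_singleton.2 hxy) (by simpa using hk)
  exact ⟨z, by simpa using hzy, hx x (Finset.mem_singleton_self x),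
    hy y (Finset.mem_singleton_self y)⟩

lemma nonempty_pawGraph_embedding_of_diamond (h : HasExtensionProperty G k) (hk : 2 < k)
    {a b c d : V} (hab : G.Adj a b) (hac : G.Adj a c) (hbc : G.Adj b c) (hbd : G.Adj b d)
    (hcd : G.Adj c d) (had : ¬ G.Adj a d) (ha : a ≠ d) : Nonempty (pawGraph ↪g G) := by
  obtain ⟨e, hed, hea, hne⟩ := h.exists_adj_not_adj hk ha
  by_cases heb : G.Adj e b
  · exact nonempty_pawGraph_embedding_of_triangle_pendant hea heb hab hbd hne had hed ha
  by_cases hec : G.Adj e c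
  · exact nonempty_pawGraph_embedding_of_triangle_pendant hea hec hac hcd hne had hed ha
  refine nonempty_pawGraph_embedding_of_triangle_pendant hbc hab.symm hac.symm hea.symm
    (heb ·.symm) (hec ·.symm) ?_ ?_
  · rintro rfl; exact hec hbc
  · rintro rfl; exact heb hbc.symm

lemma nonempty_pawGraph_embedding (h : HasExtensionProperty G k) (hk : 2 < k) :
    Nonempty (pawGraph ↪g G) := by
  obtain ⟨c⟩ := h.nonempty (by omega)
  obtain ⟨d, hdc⟩ := h.exists_adj (by omega) c
  obtain ⟨a, ha, hac, had⟩ := h.exists_adj_not_adj hk hdc.ne'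
  obtain ⟨b, hba, hbc⟩ := h.exists_adj_adj hk a c
  by_cases hbd : G.Adj b d
  · exact h.nonempty_pawGraph_embedding_of_diamond hk hba.symm hac hbc hbd hdc.symm had ha
  refine nonempty_pawGraph_embedding_of_triangle_pendant hba.symm hac hbc hdc.symm had hbd ha ?_
  rintro rfl; exact had hba.symm

end HasExtensionProperty

/-- The extension index of the paw graph equals 3: every finite graph with the
3-extension property contains an induced paw, whereas `C₄` has the 2-extension
property and is paw-free. -/
theorem extension_index_paw_eq_three :
    (∀ (V : Type) [Fintype V] (G : SimpleGraph V),
      HasExtensionProperty G 3 → Nonempty (pawGraph ↪g G)) ∧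
    HasExtensionProperty (SimpleGraph.cycleGraph 4) 2 ∧
    IsEmpty (pawGraph ↪g SimpleGraph.cycleGraph 4) :=
  ⟨fun _ _ _ h ↦ h.nonempty_pawGraph_embedding (by norm_num),
    cycleGraph_four_hasExtensionProperty_two,
    isEmpty_pawGraph_embedding_of_cliqueFree_three cycleGraph_four_cliqueFree_three⟩
end

section
/- Every finite simple graph H with at least two vertices that contains no induced copy of the path P₄ on 4 vertices has two twins, i.e., there exist distinct vertices u and v of H such that every vertex w ∉ {u, v} is adjacent to u if and only if it is adjacent to v. -/
/-!
Seinsche's argument. Let `S \ {x}` split as `A ∪ B` with no edges between the nonempty parts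
`A` and `B`. Unless `x` misses one part entirely or sees every vertex, it has neighbours in both
parts, and then no non-neighbour `r` of `x` is adjacent to a neighbour `n`: `r` and `n` would lie
in the same part, and with a neighbour `q` of `x` in the other part, `r n x q` would be an induced
`P₄`. Since `P₄` is self-complementary, the case of a complete join between `A` and `B` follows by
passing to `Gᶜ`. Hence every vertex set of size at least two of a `P₄`-free graph splits into two
nonempty parts with all or none of the edges between them; twins in a part are twins in the whole
set, and induction ends at a part of size two.
-/

open SimpleGraph Finset

namespace SimpleGraph

variable {V : Type*} {G : SimpleGraph V}

def pathGraphFourIsoCompl : pathGraph 4 ≃g (pathGraph 4)ᶜ where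
  toEquiv := ⟨![1, 3, 0, 2], ![2, 0, 3, 1], by decide, by decide⟩
  map_rel_iff' {a b} := by
    simp only [compl_adj, pathGraph_adj, Equiv.coe_fn_mk]
    revert a b; decide

lemma isEmpty_pathGraph_four_embedding_compl (hfree : IsEmpty (pathGraph 4 ↪g G)) :
    IsEmpty (pathGraph 4 ↪g Gᶜ) :=
  ⟨fun e ↦ hfree.false <|
    Embedding.complEquiv.symm (e.comp pathGraphFourIsoCompl.symm.toEmbedding)⟩

def pathGraphFourEmbedding {a b c d : V} (hab : G.Adj a b) (hbc : G.Adj b c) (hcd : G.Adj c d)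
    (hac : ¬G.Adj a c) (had : ¬G.Adj a d) (hbd : ¬G.Adj b d) : pathGraph 4 ↪g G where
  toFun := ![a, b, c, d]
  inj' := by
    have hac' : a ≠ c := by rintro rfl; exact had hcd
    have hbd' : b ≠ d := by rintro rfl; exact had hab
    have had' : a ≠ d := by rintro rfl; exact hac hcd.symm
    intro i j
    fin_cases i <;> fin_cases j <;>
      simp [hab.ne, hbc.ne, hcd.ne, hab.ne', hbc.ne', hcd.ne', hac', hbd', had', hac'.symm,
        hbd'.symm, had'.symm]
  map_rel_iff' {i j} := by
    change G.Adj (![a, b, c, d] i) (![a, b, c, d] j) ↔ _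
    fin_cases i <;> fin_cases j <;>
      simp [pathGraph_adj, hab, hbc, hcd, hac, had, hbd, G.adj_comm b a, G.adj_comm c b,
        G.adj_comm d c, G.adj_comm c a, G.adj_comm d a, G.adj_comm d b]

def HasTwinsIn (G : SimpleGraph V) (S : Finset V) : Prop :=
  ∃ u ∈ S, ∃ v ∈ S, u ≠ v ∧ ∀ w ∈ S, w ≠ u → w ≠ v → (G.Adj w u ↔ G.Adj w v)

variable [DecidableEq V]

/-- The finite-set form of "`G[S]` is disconnected (`c = False`) or has disconnected complement
(`c = True`)": `S = A ∪ B` with all or none of the edges between `A` and `B`. -/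
structure IsSplit (G : SimpleGraph V) (S A B : Finset V) (c : Prop) : Prop where
  disjoint : Disjoint A B
  union_eq : A ∪ B = S
  left_nonempty : A.Nonempty
  right_nonempty : B.Nonempty
  adj_iff : ∀ a ∈ A, ∀ b ∈ B, G.Adj a b ↔ c

variable {S A B : Finset V} {c : Prop} {x : V}

lemma isSplit_insert (hAB : Disjoint A B) (hS : A ∪ B = S) (hA : A.Nonempty) (hxA : x ∉ A)
    (hadj : ∀ a ∈ A, ∀ b ∈ insert x B, G.Adj a b ↔ c) :
    G.IsSplit (insert x S) A (insert x B) c where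
  disjoint := disjoint_insert_right.mpr ⟨hxA, hAB⟩
  union_eq := by rw [union_insert, hS]
  left_nonempty := hA
  right_nonempty := insert_nonempty x B
  adj_iff := hadj

namespace IsSplit

lemma symm (h : G.IsSplit S A B c) : G.IsSplit S B A c where
  disjoint := h.disjoint.symm
  union_eq := by rw [union_comm, h.union_eq]
  left_nonempty := h.right_nonempty
  right_nonempty := h.left_nonempty
  adj_iff b hb a ha := by rw [G.adj_comm]; exact h.adj_iff a ha b hb

lemma compl (h : G.IsSplit S A B c) : Gᶜ.IsSplit S A B (¬c) where
  disjoint := h.disjoint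
  union_eq := h.union_eq
  left_nonempty := h.left_nonempty
  right_nonempty := h.right_nonempty
  adj_iff a ha b hb := by
    rw [compl_adj, h.adj_iff a ha b hb, and_iff_right (h.disjoint.forall_ne_finset ha hb)]

lemma left_ssubset (h : G.IsSplit S A B c) : A ⊂ S := by
  rw [← h.union_eq, union_comm]
  exact h.disjoint.symm.right_lt_sup_of_left_ne_bot h.right_nonempty.ne_empty

lemma hasTwinsIn (h : G.IsSplit S A B c) (hA : G.HasTwinsIn A) : G.HasTwinsIn S := by
  obtain ⟨u, hu, v, hv, huv, htwins⟩ := hA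
  refine ⟨u, h.left_ssubset.subset hu, v, h.left_ssubset.subset hv, huv, fun w hw hwu hwv ↦ ?_⟩
  rcases mem_union.mp (h.union_eq ▸ hw) with hwA | hwB
  · exact htwins w hwA hwu hwv
  · rw [G.adj_comm w u, G.adj_comm w v, h.adj_iff u hu w hwB, h.adj_iff v hv w hwB]

lemma insert_right (h : G.IsSplit S A B False) (hx : x ∉ S) (hxA : ∀ a ∈ A, ¬G.Adj x a) :
    G.IsSplit (insert x S) A (insert x B) False := by
  refine isSplit_insert h.disjoint h.union_eq h.left_nonempty
    (fun hxA ↦ hx (h.left_ssubset.subset hxA)) fun a ha b hb ↦ ?_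
  rcases mem_insert.mp hb with rfl | hb
  · exact iff_false_intro fun hab ↦ hxA a ha hab.symm
  · exact h.adj_iff a ha b hb

lemma not_adj_of_adj_right (hfree : IsEmpty (pathGraph 4 ↪g G)) (h : G.IsSplit S A B False)
    {q r n : V} (hq : q ∈ B) (hxq : G.Adj x q) (hr : r ∈ A) (hn : n ∈ A) (hxr : ¬G.Adj x r)
    (hxn : G.Adj x n) : ¬G.Adj r n := fun hrn ↦
  hfree.false <| pathGraphFourEmbedding hrn hxn.symm hxq (fun hrx ↦ hxr hrx.symm)
    (h.adj_iff r hr q hq).mp (h.adj_iff n hn q hq).mp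

lemma insert_nonNeighbors [DecidableRel G.Adj] (hfree : IsEmpty (pathGraph 4 ↪g G))
    (h : G.IsSplit S A B False) (hx : x ∉ S) {a b y : V} (ha : a ∈ A) (hxa : G.Adj x a)
    (hb : b ∈ B) (hxb : G.Adj x b) (hy : y ∈ S) (hxy : ¬G.Adj x y) :
    G.IsSplit (insert x S) {s ∈ S | ¬G.Adj x s} (insert x {s ∈ S | G.Adj x s}) False := by
  refine isSplit_insert (disjoint_filter_filter_not S S _).symm
    (by rw [union_comm, filter_union_filter_not_eq]) ⟨y, mem_filter.mpr ⟨hy, hxy⟩⟩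
    (fun hxS ↦ hx (mem_filter.mp hxS).1) fun r hr n hn ↦ iff_false_intro ?_
  rw [mem_filter] at hr
  rcases mem_insert.mp hn with rfl | hn
  · exact fun hrx ↦ hr.2 hrx.symm
  rw [mem_filter] at hn
  rcases mem_union.mp (h.union_eq ▸ hr.1) with hrA | hrB <;>
    rcases mem_union.mp (h.union_eq ▸ hn.1) with hnA | hnB
  · exact h.not_adj_of_adj_right hfree hb hxb hrA hnA hr.2 hn.2
  · exact (h.adj_iff r hrA n hnB).mp
  · exact fun hrn ↦ (h.adj_iff n hnA r hrB).mp hrn.symm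
  · exact h.symm.not_adj_of_adj_right hfree ha hxa hrB hnB hr.2 hn.2

lemma exists_isSplit_insert_of_false (hfree : IsEmpty (pathGraph 4 ↪g G))
    (h : G.IsSplit S A B False) (hx : x ∉ S) : ∃ A' B' c', G.IsSplit (insert x S) A' B' c' := by
  classical
  by_cases hA : ∀ a ∈ A, ¬G.Adj x a
  · exact ⟨_, _, _, h.insert_right hx hA⟩
  by_cases hB : ∀ b ∈ B, ¬G.Adj x b
  · exact ⟨_, _, _, h.symm.insert_right hx hB⟩
  push Not at hA hB
  obtain ⟨a, ha, hxa⟩ := hA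
  obtain ⟨b, hb, hxb⟩ := hB
  by_cases hS : ∀ s ∈ S, G.Adj x s
  · refine ⟨S, insert x ∅, True, isSplit_insert (disjoint_empty_right S) (union_empty S)
      (h.left_nonempty.mono h.left_ssubset.subset) hx fun s hs t ht ↦ iff_true_intro ?_⟩
    obtain rfl : t = x := by simpa using ht
    exact (hS s hs).symm
  push Not at hS
  obtain ⟨y, hy, hxy⟩ := hS
  exact ⟨_, _, _, h.insert_nonNeighbors hfree hx ha hxa hb hxb hy hxy⟩

lemma exists_isSplit_insert (hfree : IsEmpty (pathGraph 4 ↪g G)) (h : G.IsSplit S A B c)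
    (hx : x ∉ S) : ∃ A' B' c', G.IsSplit (insert x S) A' B' c' := by
  by_cases hc : c
  · obtain rfl : c = True := eq_true hc
    have hcompl := h.compl
    rw [not_true_eq_false] at hcompl
    obtain ⟨A', B', c', h'⟩ :=
      hcompl.exists_isSplit_insert_of_false (isEmpty_pathGraph_four_embedding_compl hfree) hx
    exact ⟨A', B', ¬c', by simpa only [compl_compl] using h'.compl⟩
  · obtain rfl : c = False := eq_false hc
    exact h.exists_isSplit_insert_of_false hfree hx

end IsSplit

theorem exists_isSplit (hfree : IsEmpty (pathGraph 4 ↪g G)) (S : Finset V) (hS : 2 ≤ #S) :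
    ∃ A B c, G.IsSplit S A B c := by
  induction S using Finset.induction_on with
  | empty => simp at hS
  | insert x S hx ih =>
    rcases le_or_gt 2 #S with hS' | hS'
    · obtain ⟨A, B, c, h⟩ := ih hS'
      exact h.exists_isSplit_insert hfree hx
    · rw [card_insert_of_notMem hx] at hS
      obtain ⟨y, rfl⟩ := card_eq_one.mp (by omega : #S = 1)
      refine ⟨{y}, insert x ∅, G.Adj y x, isSplit_insert (disjoint_empty_right _) (union_empty _)
        (singleton_nonempty y) hx fun a ha b hb ↦ ?_⟩
      rw [mem_singleton.mp ha, mem_insert.mp hb |>.resolve_right (notMem_empty b)]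

theorem exists_hasTwinsIn (hfree : IsEmpty (pathGraph 4 ↪g G)) (S : Finset V) (hS : 2 ≤ #S) :
    G.HasTwinsIn S := by
  induction S using Finset.strongInduction with
  | H S ih =>
  rcases hS.eq_or_lt with hS2 | hS3
  · obtain ⟨u, v, huv, rfl⟩ := card_eq_two.mp hS2.symm
    refine ⟨u, by simp, v, by simp, huv, fun w hw hwu hwv ↦ ?_⟩
    simp [hwu, hwv] at hw
  · obtain ⟨A, B, c, h⟩ := exists_isSplit hfree S hS
    have hcard := card_union_of_disjoint h.disjoint
    rw [h.union_eq] at hcard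
    rcases le_or_gt 2 #A with hA | hA
    · exact h.hasTwinsIn (ih A h.left_ssubset hA)
    · exact h.symm.hasTwinsIn (ih B h.symm.left_ssubset (by omega))

end SimpleGraph

/-- Every finite `P₄`-free graph on at least two vertices has a pair of twins. -/
theorem p4_free_has_twins
    {V : Type} [Fintype V] (H : SimpleGraph V)
    (hcard : 2 ≤ Fintype.card V)
    (hfree : IsEmpty (SimpleGraph.pathGraph 4 ↪g H)) :
    ∃ u v : V, u ≠ v ∧ ∀ w : V, w ≠ u → w ≠ v → (H.Adj w u ↔ H.Adj w v) := by
  classical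
  obtain ⟨u, -, v, -, huv, htwins⟩ := exists_hasTwinsIn hfree univ hcard
  exact ⟨u, v, huv, fun w ↦ htwins w (mem_univ w)⟩
end

section
/- For every integer m ≥ 3, the m×m rook's graph has the 3-extension property. -/
/-- The `m × m` rook's graph: vertices are squares of an `m × m` board, two distinct
squares are adjacent iff they share a row or a column. -/
def rookGraph (m : ℕ) : SimpleGraph (Fin m × Fin m) where
  Adj p q := p ≠ q ∧ (p.1 = q.1 ∨ p.2 = q.2)
  symm := by
    constructor
    intro p q ⟨hne, h⟩
    exact ⟨hne.symm, by tauto⟩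
  loopless := by constructor; intro p ⟨hne, _⟩; exact hne rfl

/-!
Write every square as (row, column). A square sharing neither a row nor a column with `y` is
distinct from `y` and not adjacent to it, so all witnesses are chosen of that kind with respect to
`Y`. With at most two constraints and `m ≥ 3` rows and columns, a free row or column always
remains: for `X = ∅` take a row and a column used by no square of `Y`; for `X = {x}` move `x`
along the line it shares with no square of `Y`; for `X = {x₁, x₂}` take a third square on their
common line, or the corner `(x₁.1, x₂.2)` if they share no line.
-/

namespace rookGraph

variable {m : ℕ}

lemma adj_of_fst_eq {p q : Fin m × Fin m} (h₁ : p.1 = q.1) (h₂ : p.2 ≠ q.2) :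
    (rookGraph m).Adj p q :=
  ⟨fun h => h₂ (congrArg Prod.snd h), Or.inl h₁⟩

lemma adj_of_snd_eq {p q : Fin m × Fin m} (h₁ : p.1 ≠ q.1) (h₂ : p.2 = q.2) :
    (rookGraph m).Adj p q :=
  ⟨fun h => h₁ (congrArg Prod.fst h), Or.inr h₂⟩

lemma extension_witness {X Y : Finset (Fin m × Fin m)} {z : Fin m × Fin m}
    (hX : ∀ x ∈ X, (rookGraph m).Adj z x) (hY : ∀ y ∈ Y, z.1 ≠ y.1 ∧ z.2 ≠ y.2) :
    z ∉ X ∧ z ∉ Y ∧ (∀ x ∈ X, (rookGraph m).Adj z x) ∧ ∀ y ∈ Y, ¬(rookGraph m).Adj z y :=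
  ⟨fun hz => (hX z hz).ne rfl, fun hz => (hY z hz).1 rfl, hX,
    fun y hy ⟨_, h⟩ => h.elim (hY y hy).1 (hY y hy).2⟩

lemma exists_fst_ne_snd_ne {Y : Finset (Fin m × Fin m)} (hY : Y.card < m) :
    ∃ z : Fin m × Fin m, ∀ y ∈ Y, z.1 ≠ y.1 ∧ z.2 ≠ y.2 := by
  have exists_notMem (s : Finset (Fin m)) (hs : s.card ≤ Y.card) : ∃ c, c ∉ s := by
    simpa using Finset.exists_mem_notMem_of_card_lt_card (t := Finset.univ) (by simp; omega)
  obtain ⟨r, hr⟩ := exists_notMem (Y.image Prod.fst) Finset.card_image_le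
  obtain ⟨c, hc⟩ := exists_notMem (Y.image Prod.snd) Finset.card_image_le
  exact ⟨(r, c), fun y hy =>
    ⟨fun h => hr (Finset.mem_image.mpr ⟨y, hy, h.symm⟩),
      fun h => hc (Finset.mem_image.mpr ⟨y, hy, h.symm⟩)⟩⟩

lemma exists_adj (hm : 2 ≤ m) (x : Fin m × Fin m) : ∃ z, (rookGraph m).Adj z x := by
  have : Nontrivial (Fin m) := Fin.nontrivial_iff_two_le.mpr hm
  obtain ⟨c, hc⟩ := exists_ne x.2
  exact ⟨(x.1, c), adj_of_fst_eq rfl hc⟩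

variable (hm : 3 ≤ m)
include hm

lemma exists_ne_ne (a b : Fin m) : ∃ c, c ≠ a ∧ c ≠ b :=
  ENat.exists_ne_ne_of_three_le (by simpa using hm) a b

lemma exists_adj_fst_ne_snd_ne {x y : Fin m × Fin m} (hxy : x ≠ y) :
    ∃ z, (rookGraph m).Adj z x ∧ z.1 ≠ y.1 ∧ z.2 ≠ y.2 := by
  by_cases hrow : x.1 = y.1
  · have hcol : x.2 ≠ y.2 := fun h => hxy (Prod.ext hrow h)
    obtain ⟨r, hr₁, hr₂⟩ := exists_ne_ne hm x.1 y.1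
    exact ⟨(r, x.2), adj_of_snd_eq hr₁ rfl, hr₂, hcol⟩
  · obtain ⟨c, hc₁, hc₂⟩ := exists_ne_ne hm x.2 y.2
    exact ⟨(x.1, c), adj_of_fst_eq rfl hc₁, hrow, hc₂⟩

lemma exists_adj_adj (x₁ x₂ : Fin m × Fin m) :
    ∃ z, (rookGraph m).Adj z x₁ ∧ (rookGraph m).Adj z x₂ := by
  by_cases hrow : x₁.1 = x₂.1
  · obtain ⟨c, hc₁, hc₂⟩ := exists_ne_ne hm x₁.2 x₂.2
    exact ⟨(x₁.1, c), adj_of_fst_eq rfl hc₁, adj_of_fst_eq hrow hc₂⟩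
  by_cases hcol : x₁.2 = x₂.2
  · obtain ⟨r, hr₁, hr₂⟩ := exists_ne_ne hm x₁.1 x₂.1
    exact ⟨(r, x₁.2), adj_of_snd_eq hr₁ rfl, adj_of_snd_eq hr₂ hcol⟩
  · exact ⟨(x₁.1, x₂.2), adj_of_fst_eq rfl (Ne.symm hcol), adj_of_snd_eq hrow rfl⟩

end rookGraph

/-- For `m ≥ 3`, the `m × m` rook's graph has the 3-extension property. -/
theorem rookGraph_has_three_extension_property (m : ℕ) (hm : 3 ≤ m) :
    HasExtensionProperty (rookGraph m) 3 := by
  intro X Y hXY hcard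
  suffices ∃ z, (∀ x ∈ X, (rookGraph m).Adj z x) ∧ ∀ y ∈ Y, z.1 ≠ y.1 ∧ z.2 ≠ y.2 by
    obtain ⟨z, hX, hY⟩ := this
    exact ⟨z, rookGraph.extension_witness hX hY⟩
  rcases (by omega : X.card = 0 ∨ X.card = 1 ∨ X.card = 2) with hX | hX | hX
  · obtain ⟨z, hz⟩ := rookGraph.exists_fst_ne_snd_ne (Y := Y) (by omega)
    exact ⟨z, by simp [Finset.card_eq_zero.mp hX], hz⟩
  · obtain ⟨x, rfl⟩ := Finset.card_eq_one.mp hX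
    rcases (by omega : Y.card = 0 ∨ Y.card = 1) with hY | hY
    · obtain ⟨z, hz⟩ := rookGraph.exists_adj (by omega) x
      exact ⟨z, by simpa using hz, by simp [Finset.card_eq_zero.mp hY]⟩
    · obtain ⟨y, rfl⟩ := Finset.card_eq_one.mp hY
      obtain ⟨z, hz⟩ := rookGraph.exists_adj_fst_ne_snd_ne hm (Finset.disjoint_singleton.mp hXY)
      exact ⟨z, by simpa using hz⟩
  · obtain ⟨x₁, x₂, -, rfl⟩ := Finset.card_eq_two.mp hX
    obtain ⟨z, hz⟩ := rookGraph.exists_adj_adj hm x₁ x₂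
    exact ⟨z, by simpa using hz, by simp [Finset.card_eq_zero.mp (by omega : Y.card = 0)]⟩
end
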